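/- arXiv:1604.08412 — 10 statements merged into one kernel-verified Lean document; each statement's English description precedes it below -/
import Mathlib

section
/- Let (Ω, P) be a probability space, n ≥ 2 a natural number, and R_1, …, R_n : Ω → ℝ random variables each taking only the values −1 and +1 almost surely. Then for every choice of signs λ_1, …, λ_n ∈ {−1, +1} with ∏_{i=1}^n λ_i = −1, one has ∑_{i=1}^n λ_i · E[R_i · R_{i⊕1}] ≤ n − 2, where i⊕1 = i+1 for i < n and n⊕1 = 1. (For n = 5 and all λ_i = −1 this yields the KCBS inequality −E[R_1R_2] − E[R_2R_3] − E[R_3R_4] − E[R_4R_5] − E[R_5R_1] ≤ 3.) -/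
open MeasureTheory

lemma aux_sum (n : ℕ) (ε : Fin n → ℝ) (hε : ∀ i, ε i = -1 ∨ ε i = 1)
    (hp : ∏ i, ε i = -1) : ∑ i, ε i ≤ (n : ℝ) - 2 := by
  obtain ⟨i, hi⟩ : ∃ i, ε i = -1 := by
    by_contra h
    push_neg at h
    have h1 : ∀ i, ε i = 1 := fun i => (hε i).resolve_left (h i)
    simp [h1] at hp
    norm_num at hp
  have hn1 : 1 ≤ n := Nat.one_le_iff_ne_zero.2 (by rintro rfl; exact i.elim0)
  have h1 : ∑ j ∈ Finset.univ.erase i, ε j ≤ (n : ℝ) - 1 := by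
    calc ∑ j ∈ Finset.univ.erase i, ε j ≤ ∑ _j ∈ Finset.univ.erase i, (1:ℝ) :=
          Finset.sum_le_sum (fun j _ => by rcases hε j with h|h <;> linarith)
      _ = (n : ℝ) - 1 := by
          rw [Finset.sum_const, Finset.card_erase_of_mem (Finset.mem_univ i)]
          simp [Nat.cast_sub hn1]
  have := Finset.add_sum_erase Finset.univ ε (Finset.mem_univ i)
  rw [← this, hi]
  linarith

/-- For jointly distributed ±1-valued random variables `R 0, …, R (n-1)` on a probability
space and any choice of signs `lam i ∈ {-1, 1}` with product `-1`, the cyclic sum of signed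
expectations of products of consecutive variables is at most `n - 2`. -/
theorem stmt0 {Ω : Type*} [MeasurableSpace Ω] (P : Measure Ω) [IsProbabilityMeasure P]
    (n : ℕ) (hn : 2 ≤ n) (R : Fin n → Ω → ℝ)
    (hmeas : ∀ i, Measurable (R i))
    (hval : ∀ i, ∀ᵐ ω ∂P, R i ω = -1 ∨ R i ω = 1)
    (lam : Fin n → ℝ) (hlam : ∀ i, lam i = -1 ∨ lam i = 1)
    (hprod : ∏ i, lam i = -1) :
    ∑ i, lam i * ∫ ω, R i ω * R (i + ⟨1, by omega⟩) ω ∂P ≤ (n : ℝ) - 2 := by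
  haveI : NeZero n := ⟨by omega⟩
  set c : Fin n := ⟨1, by omega⟩ with hc
  have hval' : ∀ᵐ ω ∂P, ∀ i, R i ω = -1 ∨ R i ω = 1 := ae_all_iff.2 hval
  have hInt : ∀ i : Fin n, Integrable (fun ω => R i ω * R (i + c) ω) P := by
    intro i
    apply Integrable.mono' (integrable_const (1:ℝ))
    · exact ((hmeas i).mul (hmeas _)).aestronglyMeasurable
    · filter_upwards [hval i, hval (i + c)] with ω h1 h2
      rcases h1 with h|h <;> rcases h2 with h'|h' <;> simp [h, h']
  have key : ∑ i, lam i * ∫ ω, R i ω * R (i + c) ω ∂P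
      = ∫ ω, ∑ i, lam i * (R i ω * R (i + c) ω) ∂P := by
    rw [integral_finset_sum _ (fun i _ => (hInt i).const_mul _)]
    exact Finset.sum_congr rfl fun i _ => (integral_const_mul _ _).symm
  rw [key]
  have hb : ∫ ω, ∑ i, lam i * (R i ω * R (i + c) ω) ∂P ≤ ∫ _ω, ((n:ℝ) - 2) ∂P := by
    apply integral_mono_ae
      (integrable_finset_sum _ fun i _ => (hInt i).const_mul _) (integrable_const _)
    filter_upwards [hval'] with ω hω
    apply aux_sum n (fun i => lam i * (R i ω * R (i + c) ω))
    · intro i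
      rcases hlam i with h|h <;> rcases hω i with h1|h1 <;> rcases hω (i + c) with h2|h2 <;>
        simp [h, h1, h2]
    · have heq : ∏ i, (lam i * (R i ω * R (i + c) ω))
          = (∏ i, lam i) * ((∏ i, R i ω) * (∏ i, R (i + c) ω)) := by
        rw [Finset.prod_mul_distrib, Finset.prod_mul_distrib]
      rw [heq, hprod]
      have hshift : ∏ i, R (i + c) ω = ∏ i, R i ω :=
        Fintype.prod_equiv (Equiv.addRight c) _ _ (fun i => rfl)
      rw [hshift]
      have hsq : (∏ i, R i ω) * (∏ i, R i ω) = 1 := by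
        rw [← Finset.prod_mul_distrib]
        exact Finset.prod_eq_one fun i _ => by rcases hω i with h|h <;> simp [h]
      rw [hsq]; ring
  calc _ ≤ _ := hb
    _ = (n:ℝ) - 2 := by simp
end

section
/- Fix k ≥ 2 and p : Fin k → ℝ with 0 ≤ p i ≤ 1 for all i. Then there exists a multimaximal coupling of p, i.e., a coupling μ of p such that for every nonempty set J ⊆ Fin k and every coupling ν of p, the agreement probability of μ on J is greater than or equal to the agreement probability of ν on J. -/
open MeasureTheory

/-- A coupling of the Bernoulli marginals `p : Fin k → ℝ` is a probability measure on
`Fin k → Bool` whose `i`-th one-dimensional marginal assigns probability `p i` to `true`. -/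
def IsCoupling {k : ℕ} (p : Fin k → ℝ) (μ : Measure (Fin k → Bool)) : Prop :=
  IsProbabilityMeasure μ ∧ ∀ i : Fin k, μ {x | x i = true} = ENNReal.ofReal (p i)

/-- The agreement probability of `μ` on a set of coordinates `J`. -/
def agreeProb {k : ℕ} (μ : Measure (Fin k → Bool)) (J : Set (Fin k)) : ENNReal :=
  μ {x | ∀ i ∈ J, ∀ j ∈ J, x i = x j}

/-- A coupling of `p` is multimaximal if on every nonempty set of coordinates its agreement
probability is at least that of any other coupling of `p`. -/
def IsMultimaximal {k : ℕ} (p : Fin k → ℝ) (μ : Measure (Fin k → Bool)) : Prop :=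
  IsCoupling p μ ∧ ∀ J : Set (Fin k), J.Nonempty →
    ∀ ν : Measure (Fin k → Bool), IsCoupling p ν → agreeProb ν J ≤ agreeProb μ J

/-- For any `k ≥ 2` and Bernoulli marginals `p : Fin k → ℝ` with values in `[0, 1]`,
a multimaximal coupling of `p` exists. -/
theorem stmt3 (k : ℕ) (hk : 2 ≤ k) (p : Fin k → ℝ)
    (h0 : ∀ i, 0 ≤ p i) (h1 : ∀ i, p i ≤ 1) :
    ∃ μ : Measure (Fin k → Bool), IsMultimaximal p μ := by
  classical
  set f : ℝ → Fin k → Bool := fun u i => if u < p i then true else false with hf_def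
  have hf : Measurable f := by
    apply measurable_pi_lambda
    intro i
    exact Measurable.ite measurableSet_Iio measurable_const measurable_const
  set ν0 : Measure ℝ := volume.restrict (Set.Icc (0:ℝ) 1) with hν0
  have hprob0 : IsProbabilityMeasure ν0 := ⟨by simp [hν0, Real.volume_Icc]⟩
  set μ := Measure.map f ν0 with hμ
  have hmeasAll : ∀ s : Set (Fin k → Bool), MeasurableSet s := fun s =>
    s.to_countable.measurableSet
  have hmap : ∀ s : Set (Fin k → Bool), μ s = ν0 (f ⁻¹' s) := fun s =>
    Measure.map_apply hf (hmeasAll s)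
  have hftrue : ∀ u i, f u i = true ↔ u < p i := by
    intro u i; by_cases h : u < p i <;> simp [hf_def, h]
  have hmarg : ∀ i, μ {x | x i = true} = ENNReal.ofReal (p i) := by
    intro i
    rw [hmap]
    have hpre : f ⁻¹' {x | x i = true} = Set.Iio (p i) := by
      ext u; simp [hftrue]
    rw [hpre, hν0, Measure.restrict_apply measurableSet_Iio]
    have hset : Set.Iio (p i) ∩ Set.Icc (0:ℝ) 1 = Set.Ico 0 (p i) := by
      ext u
      simp only [Set.mem_inter_iff, Set.mem_Iio, Set.mem_Icc, Set.mem_Ico]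
      constructor
      · rintro ⟨hu1, hu2, hu3⟩; exact ⟨hu2, hu1⟩
      · rintro ⟨hu1, hu2⟩; exact ⟨hu2, hu1, hu2.le.trans (h1 i)⟩
    rw [hset, Real.volume_Ico, sub_zero]
  have hcoup : IsCoupling p μ := ⟨Measure.isProbabilityMeasure_map hf.aemeasurable, hmarg⟩
  refine ⟨μ, hcoup, ?_⟩
  intro J hJ ν hν
  obtain ⟨a, haJ, ha⟩ := Set.exists_min_image J p J.toFinite hJ
  obtain ⟨b, hbJ, hb⟩ := Set.exists_max_image J p J.toFinite hJ
  have hab : p a ≤ p b := ha b hbJ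
  -- upper bound for ν
  haveI := hν.1
  set A : Set (Fin k → Bool) := {x | ∀ i ∈ J, x i = true} with hA
  set B : Set (Fin k → Bool) := {x | ∀ i ∈ J, x i = false} with hB
  have hsub : {x : Fin k → Bool | ∀ i ∈ J, ∀ j ∈ J, x i = x j} ⊆ A ∪ B := by
    intro x hx
    rcases Bool.eq_false_or_eq_true (x a) with hxa | hxa
    · left; intro i hi; rw [hx i hi a haJ, hxa]
    · right; intro i hi; rw [hx i hi a haJ, hxa]
  have hνA : ν A ≤ ENNReal.ofReal (p a) := by
    rw [← hν.2 a]
    exact measure_mono (fun x hx => hx a haJ)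
  have hνB : ν B ≤ ENNReal.ofReal (1 - p b) := by
    have hBc : B ⊆ {x : Fin k → Bool | x b = true}ᶜ := by
      intro x hx hxb
      simp only [Set.mem_setOf_eq] at hxb
      rw [hx b hbJ] at hxb; exact Bool.false_ne_true hxb
    calc ν B ≤ ν {x : Fin k → Bool | x b = true}ᶜ := measure_mono hBc
      _ = 1 - ν {x : Fin k → Bool | x b = true} := by
          rw [measure_compl (hmeasAll _) (measure_ne_top ν _), measure_univ]
      _ = 1 - ENNReal.ofReal (p b) := by rw [hν.2 b]
      _ = ENNReal.ofReal (1 - p b) := by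
          rw [ENNReal.ofReal_sub 1 (h0 b), ENNReal.ofReal_one]
  have hup : agreeProb ν J ≤ ENNReal.ofReal (p a) + ENNReal.ofReal (1 - p b) := by
    calc agreeProb ν J ≤ ν (A ∪ B) := measure_mono hsub
      _ ≤ ν A + ν B := measure_union_le A B
      _ ≤ _ := add_le_add hνA hνB
  -- lower bound for μ
  have hlow : ENNReal.ofReal (p a) + ENNReal.ofReal (1 - p b) ≤ agreeProb μ J := by
    have hpre : Set.Ico (0:ℝ) (p a) ∪ Set.Icc (p b) 1 ⊆
        f ⁻¹' {x : Fin k → Bool | ∀ i ∈ J, ∀ j ∈ J, x i = x j} ∩ Set.Icc 0 1 := by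
      rintro u (⟨hu0, hua⟩ | ⟨hub, hu1⟩)
      · constructor
        · intro i hi j hj
          have hi' : f u i = true := (hftrue u i).mpr (hua.trans_le (ha i hi))
          have hj' : f u j = true := (hftrue u j).mpr (hua.trans_le (ha j hj))
          rw [hi', hj']
        · exact ⟨hu0, hua.le.trans (h1 a)⟩
      · constructor
        · intro i hi j hj
          have hi' : f u i = false := by
            simp only [hf_def, if_neg (not_lt.mpr ((hb i hi).trans hub))]
          have hj' : f u j = false := by
            simp only [hf_def, if_neg (not_lt.mpr ((hb j hj).trans hub))]
          rw [hi', hj']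
        · exact ⟨(h0 b).trans hub, hu1⟩
    have hdisj : Disjoint (Set.Ico (0:ℝ) (p a)) (Set.Icc (p b) 1) := by
      rw [Set.disjoint_left]
      rintro u ⟨hu0, hua⟩ ⟨hub, hu1⟩
      exact absurd (hua.trans_le (hab.trans hub)) (lt_irrefl u)
    have := measure_union (μ := volume) hdisj measurableSet_Icc
    calc ENNReal.ofReal (p a) + ENNReal.ofReal (1 - p b)
        = volume (Set.Ico (0:ℝ) (p a) ∪ Set.Icc (p b) 1) := by
          rw [this, Real.volume_Ico, Real.volume_Icc, sub_zero]
      _ ≤ volume (f ⁻¹' {x : Fin k → Bool | ∀ i ∈ J, ∀ j ∈ J, x i = x j} ∩ Set.Icc 0 1) :=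
          measure_mono hpre
      _ = agreeProb μ J := by
          rw [agreeProb, hmap, hν0, Measure.restrict_apply (hf (hmeasAll _))]
  exact hup.trans hlow
end

section
/- Fix k ≥ 2 and p : Fin k → ℝ with 0 ≤ p 0 ≤ p 1 ≤ … ≤ p (k−1) ≤ 1. For 0 ≤ l ≤ k let v_l : Fin k → Bool be the threshold vector with v_l i = false for i < l and v_l i = true for i ≥ l. Let ν be the discrete probability measure on (Fin k → Bool) assigning mass p 0 to v_0, mass p (l) − p (l−1) to v_l for 1 ≤ l ≤ k−1, mass 1 − p (k−1) to v_k, and mass 0 to every other point. Then ν is a coupling of p and ν is multimaximal. -/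
open MeasureTheory

/-- The threshold vector `v_l`: `false` on coordinates `< l`, `true` on coordinates `≥ l`. -/
def thresholdVec (k l : ℕ) : Fin k → Bool := fun i => decide (l ≤ i.val)

/-- `p` extended to `ℕ` by zero. -/
def pext {k : ℕ} (p : Fin k → ℝ) : ℕ → ℝ := fun l => if h : l < k then p ⟨l, h⟩ else 0

/-- The threshold measure of the (ordered) marginals `p`: mass `p 0` on the all-true vector
`v_0`, mass `p l - p (l-1)` on `v_l` for `1 ≤ l ≤ k-1`, mass `1 - p (k-1)` on the all-false
vector `v_k`, and mass `0` elsewhere. -/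
noncomputable def thresholdMeasure {k : ℕ} (p : Fin k → ℝ) : Measure (Fin k → Bool) :=
  ∑ l ∈ Finset.range (k + 1),
    ENNReal.ofReal
        (if l = 0 then pext p 0
         else if l = k then 1 - pext p (k - 1)
         else pext p l - pext p (l - 1)) •
      Measure.dirac (thresholdVec k l)

noncomputable def Wt (k : ℕ) (p : Fin k → ℝ) (l : ℕ) : ENNReal :=
  ENNReal.ofReal
    (if l = 0 then pext p 0
     else if l = k then 1 - pext p (k - 1)
     else pext p l - pext p (l - 1))

lemma tm_apply {k : ℕ} (p : Fin k → ℝ) (S : Set (Fin k → Bool)) :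
    thresholdMeasure p S
      = ∑ l ∈ Finset.range (k + 1), Wt k p l * S.indicator 1 (thresholdVec k l) := by
  rw [thresholdMeasure, Measure.finset_sum_apply]
  refine Finset.sum_congr rfl fun l _ => ?_
  rw [Measure.smul_apply, smul_eq_mul,
    Measure.dirac_apply' _ ((Set.to_countable S).measurableSet)]
  rfl

lemma sum_Wt {k : ℕ} (p : Fin k → ℝ) (hmono : Monotone p) (h0 : ∀ i, 0 ≤ p i) :
    ∀ n, ∀ hn : n < k, ∑ l ∈ Finset.range (n + 1), Wt k p l = ENNReal.ofReal (p ⟨n, hn⟩)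
  | 0, hn => by
      rw [Finset.sum_range_one]
      simp only [Wt, if_pos rfl, pext, dif_pos hn, if_true]
  | (n+1), hn => by
      have hn' : n < k := Nat.lt_of_succ_lt hn
      rw [Finset.sum_range_succ, sum_Wt p hmono h0 n hn']
      have h2 : n + 1 ≠ k := Nat.ne_of_lt hn
      have : Wt k p (n+1) = ENNReal.ofReal (p ⟨n+1, hn⟩ - p ⟨n, hn'⟩) := by
        simp only [Wt, if_neg (Nat.succ_ne_zero n), if_neg h2, pext, dif_pos hn,
          Nat.add_sub_cancel, dif_pos hn']
      rw [this, ← ENNReal.ofReal_add (h0 _)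
        (sub_nonneg.2 (hmono (by simp [Fin.mk_le_mk, Nat.le_succ])))]
      ring_nf

lemma sum_ite_le {k : ℕ} (p : Fin k → ℝ) (hmono : Monotone p) (h0 : ∀ i, 0 ≤ p i)
    (n : ℕ) (hn : n < k) :
    ∑ l ∈ Finset.range (k + 1), (if l ≤ n then Wt k p l else 0)
      = ENNReal.ofReal (p ⟨n, hn⟩) := by
  rw [← sum_Wt p hmono h0 n hn]
  have heq : ∑ l ∈ Finset.range (k + 1), (if l ≤ n then Wt k p l else 0)
      = ∑ l ∈ Finset.range (n + 1), (if l ≤ n then Wt k p l else 0) :=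
    (Finset.sum_subset (Finset.range_subset_range.mpr (by omega))
      (fun x _ hx => by simp only [Finset.mem_range] at hx; exact if_neg (by omega))).symm
  rw [heq]
  exact Finset.sum_congr rfl fun l hl => if_pos (by simp only [Finset.mem_range] at hl; omega)

lemma sum_Wt_total {k : ℕ} (p : Fin k → ℝ) (hk : 1 ≤ k) (hmono : Monotone p)
    (h0 : ∀ i, 0 ≤ p i) (h1 : ∀ i, p i ≤ 1) :
    ∑ l ∈ Finset.range (k + 1), Wt k p l = 1 := by
  have hk1 : k - 1 < k := by omega
  have hsum := sum_Wt p hmono h0 (k-1) hk1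
  rw [Nat.sub_add_cancel hk] at hsum
  rw [Finset.sum_range_succ, hsum]
  have : Wt k p k = ENNReal.ofReal (1 - p ⟨k-1, hk1⟩) := by
    simp only [Wt, if_neg (by omega : k ≠ 0), if_pos rfl, pext, dif_pos hk1, if_true]
  rw [this, ← ENNReal.ofReal_add (h0 _) (by linarith [h1 ⟨k-1, hk1⟩])]
  simp

lemma tm_marginal {k : ℕ} (p : Fin k → ℝ) (hmono : Monotone p) (h0 : ∀ i, 0 ≤ p i)
    (i : Fin k) :
    thresholdMeasure p {x | x i = true} = ENNReal.ofReal (p i) := by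
  rw [tm_apply]
  have hind : ∀ l, ({x : Fin k → Bool | x i = true}.indicator 1 (thresholdVec k l) : ENNReal)
      = if l ≤ i.val then 1 else 0 := by
    intro l
    by_cases h : l ≤ i.val <;> simp [Set.indicator, thresholdVec, h]
  calc ∑ l ∈ Finset.range (k + 1),
        Wt k p l * ({x : Fin k → Bool | x i = true}.indicator 1 (thresholdVec k l))
      = ∑ l ∈ Finset.range (k + 1), (if l ≤ i.val then Wt k p l else 0) := by
        refine Finset.sum_congr rfl fun l _ => ?_
        rw [hind]
        split <;> simp
    _ = ENNReal.ofReal (p ⟨i.val, i.isLt⟩) := sum_ite_le p hmono h0 i.val i.isLt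
    _ = ENNReal.ofReal (p i) := by rw [Fin.eta]

/-- For ordered Bernoulli marginals `0 ≤ p 0 ≤ … ≤ p (k-1) ≤ 1` (`k ≥ 2`), the threshold
measure is a coupling of `p` and is multimaximal. -/
theorem stmt4 (k : ℕ) (hk : 2 ≤ k) (p : Fin k → ℝ) (hmono : Monotone p)
    (h0 : ∀ i, 0 ≤ p i) (h1 : ∀ i, p i ≤ 1) :
    IsCoupling p (thresholdMeasure p) ∧ IsMultimaximal p (thresholdMeasure p) := by
  have hk1 : 1 ≤ k := by omega
  have hcoup : IsCoupling p (thresholdMeasure p) := by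
    refine ⟨⟨?_⟩, fun i => tm_marginal p hmono h0 i⟩
    rw [tm_apply]
    calc ∑ l ∈ Finset.range (k+1), Wt k p l * (Set.univ.indicator 1 (thresholdVec k l))
        = ∑ l ∈ Finset.range (k+1), Wt k p l := Finset.sum_congr rfl fun l _ => by simp
      _ = 1 := sum_Wt_total p hk1 hmono h0 h1
  refine ⟨hcoup, hcoup, ?_⟩
  intro J hJ μ hμ
  obtain ⟨m, hmJ, hmin⟩ := Set.exists_min_image J id J.toFinite hJ
  obtain ⟨M, hMJ, hmax⟩ := Set.exists_max_image J id J.toFinite hJ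
  set S : Set (Fin k → Bool) := {x | ∀ i ∈ J, ∀ j ∈ J, x i = x j} with hS
  have hmM : m.val ≤ M.val := Fin.le_def.mp (hmin M hMJ)
  have hvS : ∀ l, (S.indicator 1 (thresholdVec k l) : ENNReal)
      = if (l ≤ m.val ∨ M.val < l) then 1 else 0 := by
    intro l
    by_cases h : l ≤ m.val ∨ M.val < l
    · rw [if_pos h, Set.indicator_of_mem]
      · rfl
      · intro i hi j hj
        rcases h with h | h
        · have h1 : l ≤ i.val := le_trans h (Fin.le_def.mp (hmin i hi))
          have h2 : l ≤ j.val := le_trans h (Fin.le_def.mp (hmin j hj))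
          simp [thresholdVec, h1, h2]
        · have hiM : i ≤ M := hmax i hi
          have hjM : j ≤ M := hmax j hj
          have h1 : ¬ l ≤ i.val := by have := Fin.le_def.mp hiM; omega
          have h2 : ¬ l ≤ j.val := by have := Fin.le_def.mp hjM; omega
          simp [thresholdVec, h1, h2]
    · rw [if_neg h, Set.indicator_of_notMem]
      intro hmem
      have hx := hmem m hmJ M hMJ
      push_neg at h
      have hm : ¬ l ≤ m.val := by omega
      have hM : l ≤ M.val := by omega
      simp [thresholdVec, hm, hM] at hx
  set T := ∑ l ∈ Finset.range (k+1), (if M.val < l then Wt k p l else 0) with hT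
  have key : thresholdMeasure p S
      = ∑ l ∈ Finset.range (k+1), (if l ≤ m.val then Wt k p l else 0) + T := by
    rw [tm_apply, hT, ← Finset.sum_add_distrib]
    refine Finset.sum_congr rfl fun l _ => ?_
    rw [hvS]
    by_cases hh1 : l ≤ m.val
    · rw [if_pos (Or.inl hh1), if_pos hh1, if_neg (by omega), mul_one, add_zero]
    · by_cases hh2 : M.val < l
      · rw [if_pos (Or.inr hh2), if_neg hh1, if_pos hh2, mul_one, zero_add]
      · rw [if_neg (by tauto), if_neg hh1, if_neg hh2, mul_zero, add_zero]
  have headm : ∑ l ∈ Finset.range (k+1), (if l ≤ m.val then Wt k p l else 0)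
      = ENNReal.ofReal (p m) := by
    rw [sum_ite_le p hmono h0 m.val m.isLt, Fin.eta]
  have headM : ∑ l ∈ Finset.range (k+1), (if l ≤ M.val then Wt k p l else 0)
      = ENNReal.ofReal (p M) := by
    rw [sum_ite_le p hmono h0 M.val M.isLt, Fin.eta]
  have hsplit : ENNReal.ofReal (p M) + T = 1 := by
    rw [hT, ← headM, ← Finset.sum_add_distrib, ← sum_Wt_total p hk1 hmono h0 h1]
    refine Finset.sum_congr rfl fun l _ => ?_
    by_cases h : l ≤ M.val
    · rw [if_pos h, if_neg (by omega), add_zero]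
    · rw [if_neg h, if_pos (by omega), zero_add]
  have hrhs : thresholdMeasure p S + ENNReal.ofReal (p M)
      = ENNReal.ofReal (p m) + 1 := by
    rw [key, headm, add_assoc, add_comm T, hsplit]
  obtain ⟨hμprob, hμmarg⟩ := hμ
  set B : Set (Fin k → Bool) := {x | x M = true ∧ x m = false} with hBdef
  have hB : μ {x | x M = true} ≤ μ {x | x m = true} + μ B :=
    calc μ {x | x M = true} ≤ μ ({x | x m = true} ∪ B) := by
          refine measure_mono fun x hx => ?_
          by_cases h : x m = true
          · exact Or.inl h
          · exact Or.inr ⟨hx, by simpa using h⟩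
      _ ≤ μ {x | x m = true} + μ B := measure_union_le _ _
  have hdisj : μ S + μ B ≤ 1 := by
    have hd : Disjoint S B := by
      rw [Set.disjoint_left]
      intro x hxS hxB
      have hx := hxS m hmJ M hMJ
      rw [hxB.1, hxB.2] at hx
      simp at hx
    calc μ S + μ B = μ (S ∪ B) :=
          (measure_union hd ((Set.to_countable B).measurableSet)).symm
      _ ≤ μ Set.univ := measure_mono (Set.subset_univ _)
      _ = 1 := measure_univ
  have final : μ S + ENNReal.ofReal (p M)
      ≤ thresholdMeasure p S + ENNReal.ofReal (p M) := by
    rw [hrhs]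
    calc μ S + ENNReal.ofReal (p M) = μ S + μ {x | x M = true} := by rw [hμmarg M]
      _ ≤ μ S + (μ {x | x m = true} + μ B) := add_le_add_right hB _
      _ = (μ S + μ B) + μ {x | x m = true} := by ring
      _ ≤ 1 + ENNReal.ofReal (p m) := add_le_add hdisj (le_of_eq (hμmarg m))
      _ = ENNReal.ofReal (p m) + 1 := add_comm _ _
  exact (ENNReal.add_le_add_iff_right ENNReal.ofReal_ne_top).mp final
end

section
/- Fix k ≥ 2 and p : Fin k → ℝ with 0 ≤ p 0 ≤ p 1 ≤ … ≤ p (k−1) ≤ 1, and let ν be the threshold measure of the ordered marginals p (assigning mass p 0 to the all-true vector, mass p l − p (l−1) to the vector that is false on coordinates < l and true on coordinates ≥ l for 1 ≤ l ≤ k−1, and mass 1 − p (k−1) to the all-false vector). Then for all i ≤ j in Fin k, ν {x | x i = true ∧ x j = true} = p i, and for every nonempty J ⊆ Fin k the agreement probability of ν on J equals 1 − (max_{i ∈ J} p i − min_{i ∈ J} p i). -/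
open MeasureTheory

def gw {k : ℕ} (p : Fin k → ℝ) (l : ℕ) : ℝ :=
  if l = 0 then pext p 0
  else if l = k then 1 - pext p (k - 1)
  else pext p l - pext p (l - 1)

open Classical in
lemma thresholdMeasure_apply {k : ℕ} (p : Fin k → ℝ) (S : Set (Fin k → Bool)) :
    thresholdMeasure p S
      = ∑ l ∈ Finset.range (k + 1),
          if thresholdVec k l ∈ S then ENNReal.ofReal (gw p l) else 0 := by
  classical
  have hS : MeasurableSet S := (Set.to_countable S).measurableSet
  rw [thresholdMeasure, Measure.finset_sum_apply]
  refine Finset.sum_congr rfl fun l _ => ?_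
  rw [Measure.smul_apply, Measure.dirac_apply' _ hS, Set.indicator_apply]
  by_cases h : thresholdVec k l ∈ S <;> simp [h, gw]

lemma thresholdMeasure_apply' {k : ℕ} (p : Fin k → ℝ) (S : Set (Fin k → Bool))
    (q : ℕ → Prop) [DecidablePred q] (hq : ∀ l, l ≤ k → (thresholdVec k l ∈ S ↔ q l)) :
    thresholdMeasure p S
      = ∑ l ∈ (Finset.range (k + 1)).filter q, ENNReal.ofReal (gw p l) := by
  rw [thresholdMeasure_apply, Finset.sum_filter]
  refine Finset.sum_congr rfl fun l hl => ?_
  simp only [Finset.mem_range] at hl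
  by_cases h : q l
  · rw [if_pos h, if_pos ((hq l (by omega)).2 h)]
  · rw [if_neg h, if_neg (fun c => h ((hq l (by omega)).1 c))]

lemma gw_sum {k : ℕ} (p : Fin k → ℝ) (n : ℕ) (hn : n < k) :
    ∑ l ∈ Finset.range (n + 1), gw p l = pext p n := by
  induction n with
  | zero => simp [gw]
  | succ n ih =>
    rw [Finset.sum_range_succ, ih (by omega)]
    have h1 : n + 1 ≠ 0 := by omega
    have h2 : n + 1 ≠ k := by omega
    simp [gw, h1, h2]

lemma gw_total {k : ℕ} (p : Fin k → ℝ) (hk : 1 ≤ k) :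
    ∑ l ∈ Finset.range (k + 1), gw p l = 1 := by
  obtain ⟨m, rfl⟩ : ∃ m, k = m + 1 := ⟨k - 1, by omega⟩
  rw [Finset.sum_range_succ, gw_sum p m (by omega)]
  simp [gw]

lemma gw_tail {k : ℕ} (p : Fin k → ℝ) (M : ℕ) (hM : M < k) :
    ∑ l ∈ Finset.Ico (M + 1) (k + 1), gw p l = 1 - pext p M := by
  have h := Finset.sum_Ico_consecutive (gw p) (Nat.zero_le (M + 1)) (by omega : M + 1 ≤ k + 1)
  have h1 : ∑ l ∈ Finset.Ico 0 (M + 1), gw p l = pext p M := by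
    rw [← Finset.range_eq_Ico]; exact gw_sum p M hM
  have h2 : ∑ l ∈ Finset.Ico 0 (k + 1), gw p l = 1 := by
    rw [← Finset.range_eq_Ico]; exact gw_total p (by omega)
  linarith

lemma gw_nonneg {k : ℕ} (p : Fin k → ℝ) (hmono : Monotone p) (h0 : ∀ i, 0 ≤ p i)
    (h1 : ∀ i, p i ≤ 1) (hk : 1 ≤ k) (l : ℕ) (hl : l ≤ k) : 0 ≤ gw p l := by
  unfold gw pext
  rcases Nat.eq_zero_or_pos l with rfl | hlpos
  · simp only [if_pos rfl]
    rw [dif_pos (by omega)]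
    exact h0 _
  rcases eq_or_ne l k with heq | hne
  · have h1' : l ≠ 0 := by omega
    simp only [if_neg h1', if_pos heq]
    rw [dif_pos (by omega : k - 1 < k)]
    linarith [h1 ⟨k - 1, by omega⟩]
  · have h1' : l ≠ 0 := by omega
    have hlk : l < k := by omega
    simp only [if_neg h1', if_neg hne]
    rw [dif_pos hlk, dif_pos (by omega : l - 1 < k)]
    have := hmono (show (⟨l - 1, by omega⟩ : Fin k) ≤ ⟨l, hlk⟩ from Fin.mk_le_mk.mpr (by omega))
    linarith

/-- For ordered Bernoulli marginals `0 ≤ p 0 ≤ … ≤ p (k-1) ≤ 1` (`k ≥ 2`), the threshold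
measure `ν` satisfies `ν {x | x i = x j = true} = p i` for `i ≤ j`, and for every nonempty
`J ⊆ Fin k` its agreement probability on `J` equals `1 - (max_{i ∈ J} p i - min_{i ∈ J} p i)`. -/
theorem stmt5 (k : ℕ) (hk : 2 ≤ k) (p : Fin k → ℝ) (hmono : Monotone p)
    (h0 : ∀ i, 0 ≤ p i) (h1 : ∀ i, p i ≤ 1) :
    (∀ i j : Fin k, i ≤ j →
      thresholdMeasure p {x | x i = true ∧ x j = true} = ENNReal.ofReal (p i)) ∧
    (∀ (J : Finset (Fin k)) (hJ : J.Nonempty),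
      agreeProb (thresholdMeasure p) (J : Set (Fin k)) =
        ENNReal.ofReal (1 - (J.sup' hJ p - J.inf' hJ p))) := by
  classical
  have hk1 : 1 ≤ k := by omega
  have hnn := gw_nonneg p hmono h0 h1 hk1
  constructor
  · intro i j hij
    rw [thresholdMeasure_apply' p _ (fun l => l ≤ i.val) (fun l _ => by
      simp only [Set.mem_setOf_eq, thresholdVec, decide_eq_true_eq]
      exact ⟨fun h => h.1, fun h => ⟨h, le_trans h hij⟩⟩)]
    have hfil : (Finset.range (k + 1)).filter (fun l => l ≤ i.val)
        = Finset.range (i.val + 1) := by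
      ext l
      simp only [Finset.mem_filter, Finset.mem_range]
      have := i.isLt
      omega
    rw [hfil, ← ENNReal.ofReal_sum_of_nonneg (fun l hl => hnn l (by
        simp only [Finset.mem_range] at hl; omega)),
      gw_sum p i.val i.isLt]
    congr 1
    simp [pext, i.isLt]
  · intro J hJ
    set m := J.min' hJ with hm
    set M := J.max' hJ with hM
    have hmM : m ≤ M := J.min'_le M (J.max'_mem hJ)
    have hsup : J.sup' hJ p = p M :=
      le_antisymm (Finset.sup'_le _ _ fun b hb => hmono (J.le_max' b hb))
        (Finset.le_sup' p (J.max'_mem hJ))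
    have hinf : J.inf' hJ p = p m :=
      le_antisymm (Finset.inf'_le p (J.min'_mem hJ))
        (Finset.le_inf' _ _ fun b hb => hmono (J.min'_le b hb))
    have hq : ∀ l, l ≤ k → (thresholdVec k l ∈ {x : Fin k → Bool | ∀ i ∈ (J : Set (Fin k)),
        ∀ j ∈ (J : Set (Fin k)), x i = x j} ↔ (l ≤ m.val ∨ M.val + 1 ≤ l)) := by
      intro l hlk
      simp only [Set.mem_setOf_eq, Finset.mem_coe, thresholdVec]
      constructor
      · intro hagree
        by_contra hcon
        push_neg at hcon
        have := hagree m (J.min'_mem hJ) M (J.max'_mem hJ)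
        simp only [decide_eq_decide] at this
        omega
      · intro h a ha b hb
        have ham : m ≤ a := J.min'_le a ha
        have haM : a ≤ M := J.le_max' a ha
        have hbm : m ≤ b := J.min'_le b hb
        have hbM : b ≤ M := J.le_max' b hb
        rw [Fin.le_def] at ham haM hbm hbM
        simp only [decide_eq_decide]
        omega
    rw [agreeProb, thresholdMeasure_apply' p _ _ hq]
    have hfil : (Finset.range (k + 1)).filter (fun l => l ≤ m.val ∨ M.val + 1 ≤ l)
        = Finset.range (m.val + 1) ∪ Finset.Ico (M.val + 1) (k + 1) := by
      ext l
      simp only [Finset.mem_filter, Finset.mem_range, Finset.mem_union, Finset.mem_Ico]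
      omega
    have hdisj : Disjoint (Finset.range (m.val + 1)) (Finset.Ico (M.val + 1) (k + 1)) := by
      rw [Finset.disjoint_left]
      intro a ha hb
      simp only [Finset.mem_range] at ha
      simp only [Finset.mem_Ico] at hb
      have : m.val ≤ M.val := hmM
      omega
    rw [hfil, Finset.sum_union hdisj,
      ← ENNReal.ofReal_sum_of_nonneg (fun l hl => hnn l (by
        simp only [Finset.mem_range] at hl; have := m.isLt; omega)),
      ← ENNReal.ofReal_sum_of_nonneg (fun l hl => hnn l (by
        simp only [Finset.mem_Ico] at hl; omega)),
      gw_sum p m.val m.isLt, gw_tail p M.val M.isLt,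
      ← ENNReal.ofReal_add (by simp [pext, m.isLt]; exact h0 m) (by
        simp [pext, M.isLt]; linarith [h1 M])]
    congr 1
    rw [hsup, hinf]
    simp only [pext, m.isLt, M.isLt, dif_pos]
    ring
end

section
/- Fix k ≥ 2 and p : Fin k → ℝ with 0 ≤ p 0 ≤ p 1 ≤ … ≤ p (k−1) ≤ 1. If μ is any multimaximal coupling of p, then μ equals the threshold measure ν of the ordered marginals p (the measure assigning mass p 0 to the all-true vector, mass p l − p (l−1) to the vector that is false on coordinates < l and true on coordinates ≥ l for 1 ≤ l ≤ k−1, and mass 1 − p (k−1) to the all-false vector). In particular, the multimaximal coupling of p is unique. -/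
open MeasureTheory

namespace Stmt6Aux


lemma measSet {k : ℕ} (s : Set (Fin k → Bool)) : MeasurableSet s := s.to_countable.measurableSet

def M (k : ℕ) : Set (Fin k → Bool) := {x | ∀ i j : Fin k, i ≤ j → x i = true → x j = true}

lemma tv_mem_M {k l : ℕ} : thresholdVec k l ∈ M k := by
  intro i j hij hi
  simp only [thresholdVec, decide_eq_true_eq] at *
  exact hi.trans hij

lemma tv_inj {k : ℕ} {l m : ℕ} (hl : l ≤ k) (hm : m ≤ k)
    (h : thresholdVec k l = thresholdVec k m) : l = m := by
  rcases lt_trichotomy l m with hlt | he | hlt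
  · exfalso
    have hlk : l < k := lt_of_lt_of_le hlt hm
    have := congrFun h ⟨l, hlk⟩
    simp [thresholdVec, Nat.not_le.mpr hlt] at this
  · exact he
  · exfalso
    have hmk : m < k := lt_of_lt_of_le hlt hl
    have := congrFun h ⟨m, hmk⟩
    simp [thresholdVec, Nat.not_le.mpr hlt] at this

lemma mem_M_iff {k : ℕ} (x : Fin k → Bool) : x ∈ M k ↔ ∃ l ≤ k, x = thresholdVec k l := by
  constructor
  · intro hx
    by_cases h : ∃ n : ℕ, ∃ hn : n < k, x ⟨n, hn⟩ = true
    · refine ⟨Nat.find h, ?_, ?_⟩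
      · exact le_of_lt (Nat.find_spec h).1  -- l < k
      · funext i
        obtain ⟨hlk, hxl⟩ := Nat.find_spec h
        by_cases hi : Nat.find h ≤ i.val
        · have : x i = true := hx ⟨Nat.find h, hlk⟩ i (by simpa [Fin.le_def] using hi) hxl
          simp [thresholdVec, hi, this]
        · have hmin := Nat.find_min h (Nat.not_le.mp hi)
          push_neg at hmin
          have : x i ≠ true := by
            have := hmin i.isLt
            simpa using this
          simp [thresholdVec, hi, Bool.not_eq_true] at this ⊢
          exact this
    · refine ⟨k, le_refl k, ?_⟩
      funext i
      push_neg at h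
      have : x i ≠ true := by have := h i.val i.isLt; simpa using this
      simp [thresholdVec, Nat.not_le.mpr i.isLt, Bool.not_eq_true] at this ⊢
      exact this
  · rintro ⟨l, _, rfl⟩
    exact tv_mem_M


def cc {k : ℕ} (p : Fin k → ℝ) (l : ℕ) : ℝ :=
  if l = 0 then pext p 0 else if l = k then 1 - pext p (k - 1) else pext p l - pext p (l - 1)

def ff {k : ℕ} (p : Fin k → ℝ) (l : ℕ) : ℝ :=
  if l = 0 then 0 else if l ≤ k then pext p (l - 1) else 1

lemma cc_eq_sub {k : ℕ} (hk : 2 ≤ k) (p : Fin k → ℝ) {l : ℕ} (hl : l ≤ k) :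
    cc p l = ff p (l + 1) - ff p l := by
  by_cases hl0 : l = 0
  · subst hl0
    have h1 : (1 : ℕ) ≤ k := by omega
    simp [cc, ff, h1]
  · by_cases hlk : l = k
    · subst hlk
      have h1 : ¬ (l + 1 ≤ l) := by omega
      simp [cc, ff, hl0, h1]
    · have h3 : ¬ (l + 1 = 0) := by omega
      have h4 : l + 1 ≤ k := by omega
      have h5 : l + 1 - 1 = l := by omega
      simp [cc, ff, hl0, hlk, h3, h4, h5, hl]

lemma cc_sum_partial {k : ℕ} (hk : 2 ≤ k) (p : Fin k → ℝ) {i : ℕ} (hi : i < k) :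
    ∑ l ∈ Finset.range (i + 1), cc p l = pext p i := by
  have h : ∀ l ∈ Finset.range (i + 1), cc p l = ff p (l + 1) - ff p l := by
    intro l hl
    exact cc_eq_sub hk p (by simp at hl; omega)
  rw [Finset.sum_congr rfl h, Finset.sum_range_sub (ff p)]
  have h1 : ¬ (i + 1 = 0) := by omega
  have h2 : i + 1 ≤ k := hi
  simp [ff, h1, h2]

lemma cc_sum_total {k : ℕ} (hk : 2 ≤ k) (p : Fin k → ℝ) :
    ∑ l ∈ Finset.range (k + 1), cc p l = 1 := by
  have h : ∀ l ∈ Finset.range (k + 1), cc p l = ff p (l + 1) - ff p l := by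
    intro l hl
    exact cc_eq_sub hk p (by simp at hl; omega)
  rw [Finset.sum_congr rfl h, Finset.sum_range_sub (ff p)]
  have h2 : ¬ (k + 1 ≤ k) := by omega
  have h1 : ¬ (k + 1 = 0) := by omega
  simp [ff, h1, h2]

lemma cc_nonneg {k : ℕ} (hk : 2 ≤ k) (p : Fin k → ℝ) (hmono : Monotone p)
    (h0 : ∀ i, 0 ≤ p i) (h1 : ∀ i, p i ≤ 1) {l : ℕ} (hl : l ≤ k) : 0 ≤ cc p l := by
  by_cases hl0 : l = 0
  · subst hl0
    have hk0 : 0 < k := by omega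
    simp [cc, pext, hk0]
    exact h0 _
  · by_cases hlk : l = k
    · subst hlk
      have h3 : l - 1 < l := by omega
      simp [cc, pext, hl0, h3]
      exact h1 _
    · have h4 : l - 1 < k := by omega
      have h5 : l < k := by omega
      simp [cc, pext, hl0, hlk, h4, h5]
      have : (⟨l-1, h4⟩ : Fin _) ≤ ⟨l, h5⟩ := by simp [Fin.le_def]
      linarith [hmono this]

lemma tm_apply {k : ℕ} (p : Fin k → ℝ) (s : Set (Fin k → Bool)) :
    thresholdMeasure p s =
      ∑ l ∈ Finset.range (k + 1),
        ENNReal.ofReal (cc p l) * s.indicator 1 (thresholdVec k l) := by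
  rw [thresholdMeasure, Measure.finset_sum_apply]
  refine Finset.sum_congr rfl fun l _ => ?_
  rw [Measure.smul_apply, Measure.dirac_apply' _ (measSet s), smul_eq_mul]
  rfl


lemma pair_identity {k : ℕ} (κ : Measure (Fin k → Bool)) (i j : Fin k) :
    κ {x | x i = x j} + 2 * κ {x | x i = true ∧ x j = false}
      = κ {x | x i = true} + κ {x | x j = false} := by
  have hA : ({x : Fin k → Bool | x i = x j})
      = {x | x i = true ∧ x j = true} ∪ {x | x i = false ∧ x j = false} := by
    ext x; cases hx : x i <;> cases hy : x j <;> simp [hx, hy]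
  have hT : ({x : Fin k → Bool | x i = true})
      = {x | x i = true ∧ x j = true} ∪ {x | x i = true ∧ x j = false} := by
    ext x; cases hx : x i <;> cases hy : x j <;> simp [hx, hy]
  have hF : ({x : Fin k → Bool | x j = false})
      = {x | x i = true ∧ x j = false} ∪ {x | x i = false ∧ x j = false} := by
    ext x; cases hx : x i <;> cases hy : x j <;> simp [hx, hy]
  have d1 : Disjoint {x : Fin k → Bool | x i = true ∧ x j = true}
      {x : Fin k → Bool | x i = false ∧ x j = false} := by
    rw [Set.disjoint_left]; rintro x ⟨h1, _⟩ ⟨h3, _⟩; rw [h1] at h3; exact Bool.noConfusion h3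
  have d2 : Disjoint {x : Fin k → Bool | x i = true ∧ x j = true}
      {x : Fin k → Bool | x i = true ∧ x j = false} := by
    rw [Set.disjoint_left]; rintro x ⟨_, h2⟩ ⟨_, h4⟩; rw [h2] at h4; exact Bool.noConfusion h4
  have d3 : Disjoint {x : Fin k → Bool | x i = true ∧ x j = false}
      {x : Fin k → Bool | x i = false ∧ x j = false} := by
    rw [Set.disjoint_left]; rintro x ⟨h1, _⟩ ⟨h3, _⟩; rw [h1] at h3; exact Bool.noConfusion h3
  rw [hA, hT, hF, measure_union d1 (measSet _), measure_union d2 (measSet _),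
    measure_union d3 (measSet _)]
  ring

lemma false_marg {k : ℕ} (p : Fin k → ℝ) (κ : Measure (Fin k → Bool))
    (hκ : IsCoupling p κ) (j : Fin k) :
    κ {x | x j = false} = 1 - ENNReal.ofReal (p j) := by
  haveI := hκ.1
  have h : {x : Fin k → Bool | x j = false} = {x | x j = true}ᶜ := by
    ext x; cases hx : x j <;> simp [hx]
  rw [h, measure_compl (measSet _) (measure_ne_top κ _), measure_univ, hκ.2]

lemma meas_inter_M {k : ℕ} (κ : Measure (Fin k → Bool)) (hM : κ (M k)ᶜ = 0)
    (s : Set (Fin k → Bool)) : κ s = κ (s ∩ M k) := by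
  have h := measure_inter_add_diff (μ := κ) s (measSet (M k))
  have h2 : κ (s \ M k) = 0 := measure_mono_null (fun x hx => hx.2) hM
  rw [h2, add_zero] at h
  exact h.symm


-- ν is a coupling
lemma tm_prob {k : ℕ} (hk : 2 ≤ k) (p : Fin k → ℝ) (hmono : Monotone p)
    (h0 : ∀ i, 0 ≤ p i) (h1 : ∀ i, p i ≤ 1) :
    IsProbabilityMeasure (thresholdMeasure p) := by
  constructor
  rw [tm_apply]
  have : ∀ l ∈ Finset.range (k + 1),
      ENNReal.ofReal (cc p l) * (Set.univ.indicator 1 (thresholdVec k l))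
        = ENNReal.ofReal (cc p l) := by
    intro l _; simp
  rw [Finset.sum_congr rfl this,
    ← ENNReal.ofReal_sum_of_nonneg (fun l hl => cc_nonneg hk p hmono h0 h1 (by simp at hl; omega)),
    cc_sum_total hk p, ENNReal.ofReal_one]

lemma tm_marg {k : ℕ} (hk : 2 ≤ k) (p : Fin k → ℝ) (hmono : Monotone p)
    (h0 : ∀ i, 0 ≤ p i) (h1 : ∀ i, p i ≤ 1) (i : Fin k) :
    thresholdMeasure p {x | x i = true} = ENNReal.ofReal (p i) := by
  rw [tm_apply]
  have hind : ∀ l : ℕ,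
      ENNReal.ofReal (cc p l) * ({x : Fin k → Bool | x i = true}.indicator 1 (thresholdVec k l))
        = if l ≤ i.val then ENNReal.ofReal (cc p l) else 0 := by
    intro l
    by_cases h : l ≤ i.val <;>
      simp [Set.indicator_apply, Set.mem_setOf_eq, thresholdVec, h]
  rw [Finset.sum_congr rfl (fun l _ => hind l)]
  have hsub : Finset.range (i.val + 1) ⊆ Finset.range (k + 1) :=
    Finset.range_subset_range.mpr (by have := i.isLt; omega)
  rw [← Finset.sum_subset hsub (by intro l hl hl2; simp at hl hl2 ⊢; omega)]
  have : ∀ l ∈ Finset.range (i.val + 1),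
      (if l ≤ i.val then ENNReal.ofReal (cc p l) else 0) = ENNReal.ofReal (cc p l) := by
    intro l hl; simp at hl; simp [hl]
  rw [Finset.sum_congr rfl this,
    ← ENNReal.ofReal_sum_of_nonneg (fun l hl => cc_nonneg hk p hmono h0 h1 (by simp at hl; omega)),
    cc_sum_partial hk p i.isLt]
  simp [pext, i.isLt]

lemma tm_null_M {k : ℕ} (p : Fin k → ℝ) : thresholdMeasure p (M k)ᶜ = 0 := by
  rw [tm_apply]
  apply Finset.sum_eq_zero
  intro l _
  have : ((M k)ᶜ : Set (Fin k → Bool)).indicator (1 : (Fin k → Bool) → ENNReal) (thresholdVec k l) = 0 := by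
    simp [Set.indicator_apply, tv_mem_M]
  rw [this, mul_zero]

-- measure of union of threshold singletons
lemma sum_singletons {k : ℕ} (κ : Measure (Fin k → Bool)) (t : Finset ℕ)
    (ht : t ⊆ Finset.range (k + 1)) :
    κ (⋃ m ∈ t, {thresholdVec k m}) = ∑ m ∈ t, κ {thresholdVec k m} := by
  apply measure_biUnion_finset _ (fun b _ => measSet _)
  intro a ha b hb hab
  simp only [Function.onFun, Set.disjoint_singleton]
  intro h
  exact hab (tv_inj (by have := ht ha; simp at this; omega)
    (by have := ht hb; simp at this; omega) h)

lemma biUnion_eq_inter {k : ℕ} {l : ℕ} (hl : l < k) :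
    (⋃ m ∈ Finset.range (l + 1), ({thresholdVec k m} : Set (Fin k → Bool)))
      = M k ∩ {x | x ⟨l, hl⟩ = true} := by
  ext x
  simp only [Set.mem_iUnion, Set.mem_singleton_iff, Set.mem_inter_iff, Set.mem_setOf_eq,
    Finset.mem_range, exists_prop]
  constructor
  · rintro ⟨m, hm, rfl⟩
    exact ⟨tv_mem_M, by simp [thresholdVec]; omega⟩
  · rintro ⟨hxM, hxl⟩
    obtain ⟨m, hmk, rfl⟩ := (mem_M_iff x).mp hxM
    refine ⟨m, ?_, rfl⟩
    simp [thresholdVec] at hxl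
    omega

lemma biUnion_eq_M {k : ℕ} :
    (⋃ m ∈ Finset.range (k + 1), ({thresholdVec k m} : Set (Fin k → Bool))) = M k := by
  ext x
  simp only [Set.mem_iUnion, Set.mem_singleton_iff, Finset.mem_range, exists_prop, mem_M_iff]
  constructor
  · rintro ⟨m, hm, rfl⟩; exact ⟨m, by omega, rfl⟩
  · rintro ⟨m, hm, rfl⟩; exact ⟨m, by omega, rfl⟩

lemma cum {k : ℕ} (hk : 2 ≤ k) (p : Fin k → ℝ) (κ : Measure (Fin k → Bool))
    (hκ : IsCoupling p κ) (hM : κ (M k)ᶜ = 0) :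
    ∀ l ≤ k, ∑ m ∈ Finset.range (l + 1), κ {thresholdVec k m}
      = if l < k then ENNReal.ofReal (pext p l) else 1 := by
  haveI := hκ.1
  intro l hl
  rw [← sum_singletons κ _ (Finset.range_subset_range.mpr (by omega))]
  by_cases h : l < k
  · rw [biUnion_eq_inter h, if_pos h, Set.inter_comm]
    have heq : κ {x : Fin k → Bool | x ⟨l, h⟩ = true}
        = κ ({x : Fin k → Bool | x ⟨l, h⟩ = true} ∩ M k) := by
      have hh := measure_inter_add_diff (μ := κ) {x : Fin k → Bool | x ⟨l, h⟩ = true}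
        (measSet (M k))
      have h2 : κ ({x : Fin k → Bool | x ⟨l, h⟩ = true} \ M k) = 0 :=
        measure_mono_null (fun x hx => hx.2) hM
      rw [h2, add_zero] at hh
      exact hh.symm
    rw [← heq, hκ.2 ⟨l, h⟩]
    simp [pext, h]
  · have hlk : l = k := by omega
    rw [if_neg h, hlk, biUnion_eq_M]
    have hh := measure_add_measure_compl (μ := κ) (measSet (M k))
    rw [hM, add_zero, measure_univ] at hh
    exact hh

lemma unique_on_M {k : ℕ} (hk : 2 ≤ k) (p : Fin k → ℝ)
    (κ κ' : Measure (Fin k → Bool)) (hκ : IsCoupling p κ) (hκ' : IsCoupling p κ')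
    (hMκ : κ (M k)ᶜ = 0) (hMκ' : κ' (M k)ᶜ = 0) : κ = κ' := by
  have hcum := cum hk p κ hκ hMκ
  have hcum' := cum hk p κ' hκ' hMκ'
  have hatom : ∀ l ≤ k, κ {thresholdVec k l} = κ' {thresholdVec k l} := by
    intro l hl
    have e1 := hcum l hl
    have e1' := hcum' l hl
    cases l with
    | zero =>
      rw [Finset.sum_range_one] at e1 e1'
      exact e1.trans e1'.symm
    | succ n =>
      rw [Finset.sum_range_succ] at e1 e1'
      rw [hcum n (by omega)] at e1
      rw [hcum' n (by omega)] at e1'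
      have hne : (if n < k then ENNReal.ofReal (pext p n) else 1) ≠ ⊤ := by
        split <;> simp
      exact (ENNReal.add_right_inj hne).mp (e1.trans e1'.symm)
  ext s hs
  classical
  have key : ∀ ρ : Measure (Fin k → Bool), ρ (M k)ᶜ = 0 →
      ρ s = ∑ m ∈ (Finset.range (k + 1)).filter (fun m => thresholdVec k m ∈ s),
        ρ {thresholdVec k m} := by
    intro ρ hρ
    have hseq : s ∩ M k = ⋃ m ∈ (Finset.range (k + 1)).filter (fun m => thresholdVec k m ∈ s),
        ({thresholdVec k m} : Set (Fin k → Bool)) := by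
      ext x
      simp only [Set.mem_inter_iff, Set.mem_iUnion, Set.mem_singleton_iff, Finset.mem_filter,
        Finset.mem_range, exists_prop]
      constructor
      · rintro ⟨hxs, hxM⟩
        obtain ⟨m, hmk, rfl⟩ := (mem_M_iff x).mp hxM
        exact ⟨m, ⟨by omega, hxs⟩, rfl⟩
      · rintro ⟨m, ⟨hmk, hms⟩, rfl⟩
        exact ⟨hms, tv_mem_M⟩
    have h1 : ρ s = ρ (s ∩ M k) := by
      have hh := measure_inter_add_diff (μ := ρ) s (measSet (M k))
      have h2 : ρ (s \ M k) = 0 := measure_mono_null (fun x hx => hx.2) hρ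
      rw [h2, add_zero] at hh
      exact hh.symm
    rw [h1, hseq, sum_singletons ρ _ (Finset.filter_subset _ _)]
  rw [key κ hMκ, key κ' hMκ']
  exact Finset.sum_congr rfl fun m hm => hatom m (by simp at hm; omega)


end Stmt6Aux

open Stmt6Aux in
/-- For ordered Bernoulli marginals `0 ≤ p 0 ≤ … ≤ p (k-1) ≤ 1` (`k ≥ 2`), any multimaximal
coupling of `p` equals the threshold measure; in particular it is unique. -/
theorem stmt6 (k : ℕ) (hk : 2 ≤ k) (p : Fin k → ℝ) (hmono : Monotone p)
    (h0 : ∀ i, 0 ≤ p i) (h1 : ∀ i, p i ≤ 1)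
    (μ : Measure (Fin k → Bool)) (hμ : IsMultimaximal p μ) :
    μ = thresholdMeasure p := by
  obtain ⟨hμc, hmax⟩ := hμ
  haveI := hμc.1
  have hνc : IsCoupling p (thresholdMeasure p) :=
    ⟨tm_prob hk p hmono h0 h1, tm_marg hk p hmono h0 h1⟩
  have hagree : ∀ (κ : Measure (Fin k → Bool)) (i j : Fin k),
      agreeProb κ ({i, j} : Set (Fin k)) = κ {x | x i = x j} := by
    intro κ i j
    unfold agreeProb
    congr 1
    ext x
    simp only [Set.mem_setOf_eq, Set.mem_insert_iff, Set.mem_singleton_iff]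
    constructor
    · intro h
      exact h i (Or.inl rfl) j (Or.inr rfl)
    · rintro h a (rfl | rfl) b (rfl | rfl)
      · rfl
      · exact h
      · exact h.symm
      · rfl
  have hbad : ∀ i j : Fin k, i ≤ j → μ {x | x i = true ∧ x j = false} = 0 := by
    intro i j hij
    have hBν : thresholdMeasure p {x | x i = true ∧ x j = false} = 0 := by
      refine measure_mono_null ?_ (tm_null_M p)
      intro x hx hxM
      have := hxM i j hij hx.1
      rw [hx.2] at this
      exact Bool.noConfusion this
    have hidμ := pair_identity μ i j
    have hidν := pair_identity (thresholdMeasure p) i j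
    rw [hBν, mul_zero, add_zero] at hidν
    have hmargs : μ {x | x i = true} = thresholdMeasure p {x | x i = true} := by
      rw [hμc.2, hνc.2]
    have hmargf : μ {x | x j = false} = thresholdMeasure p {x | x j = false} := by
      rw [false_marg p μ hμc, false_marg p (thresholdMeasure p) hνc]
    have hAle : thresholdMeasure p {x | x i = x j} ≤ μ {x | x i = x j} := by
      have := hmax ({i, j} : Set (Fin k)) ⟨i, Or.inl rfl⟩ (thresholdMeasure p) hνc
      rwa [hagree, hagree] at this
    have hle : μ {x | x i = x j} + 2 * μ {x | x i = true ∧ x j = false}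
        ≤ μ {x | x i = x j} + 0 := by
      rw [hidμ, hmargs, hmargf, ← hidν, add_zero]
      exact hAle
    have h2 : 2 * μ {x | x i = true ∧ x j = false} ≤ 0 :=
      (ENNReal.add_le_add_iff_left (measure_ne_top μ _)).mp hle
    have h3 : 2 * μ {x | x i = true ∧ x j = false} = 0 := le_antisymm h2 zero_le
    simpa using h3
  have hμM : μ (M k)ᶜ = 0 := by
    have hnull : μ (⋃ q : Fin k × Fin k,
        {x : Fin k → Bool | q.1 ≤ q.2 ∧ x q.1 = true ∧ x q.2 = false}) = 0 := by
      refine measure_iUnion_null fun q => ?_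
      by_cases h : q.1 ≤ q.2
      · refine measure_mono_null ?_ (hbad q.1 q.2 h)
        intro x hx
        exact ⟨hx.2.1, hx.2.2⟩
      · refine measure_mono_null ?_ (measure_empty (μ := μ))
        intro x hx
        exact absurd hx.1 h
    refine measure_mono_null ?_ hnull
    intro x hx
    simp only [M, Set.mem_compl_iff, Set.mem_setOf_eq, not_forall] at hx
    obtain ⟨i, j, hij, hxi, hxj⟩ := hx
    refine Set.mem_iUnion.mpr ⟨(i, j), hij, hxi, ?_⟩
    simpa using hxj
  exact unique_on_M hk p μ (thresholdMeasure p) hμc hνc hμM (tm_null_M p)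
end

section
/- Fix k ≥ 2 and p : Fin k → ℝ with 0 ≤ p 0 ≤ p 1 ≤ … ≤ p (k−1) ≤ 1, and let μ be a coupling of p such that μ {x | x l = x (l+1)} = 1 − (p (l+1) − p l) for every l with 0 ≤ l ≤ k−2. Then for every l in Fin k, μ {x | x m = true for all m ≥ l} = p l. -/
open MeasureTheory

/-- If a coupling `μ` of ordered Bernoulli marginals `0 ≤ p 0 ≤ … ≤ p (k-1) ≤ 1` (`k ≥ 2`)
makes every consecutive pair of coordinates a maximal coupling, then for every `l`,
`μ {x | x m = true for all m ≥ l} = p l`. -/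
theorem stmt9 (k : ℕ) (hk : 2 ≤ k) (p : Fin k → ℝ) (hmono : Monotone p)
    (h0 : ∀ i, 0 ≤ p i) (h1 : ∀ i, p i ≤ 1)
    (μ : Measure (Fin k → Bool)) (hμ : IsCoupling p μ)
    (hmax : ∀ (l : ℕ) (h : l + 1 < k),
      μ {x | x ⟨l, Nat.lt_of_succ_lt h⟩ = x ⟨l + 1, h⟩} =
        ENNReal.ofReal (1 - (p ⟨l + 1, h⟩ - p ⟨l, Nat.lt_of_succ_lt h⟩))) :
    ∀ l : Fin k, μ {x | ∀ m : Fin k, l ≤ m → x m = true} = ENNReal.ofReal (p l) := by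
  obtain ⟨hprob, hmarg⟩ := hμ
  haveI := hprob
  have hms : ∀ s : Set (Fin k → Bool), MeasurableSet s := fun s => s.to_countable.measurableSet
  -- the key null-difference lemma
  have hnull : ∀ (l : ℕ) (h : l + 1 < k),
      μ ({x | x ⟨l, Nat.lt_of_succ_lt h⟩ = true} \ {x | x ⟨l+1, h⟩ = true}) = 0 := by
    intro l h
    set i : Fin k := ⟨l, Nat.lt_of_succ_lt h⟩
    set j : Fin k := ⟨l+1, h⟩
    set T : Set (Fin k → Bool) := {x | x i = true}
    set U : Set (Fin k → Bool) := {x | x j = true}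
    have hd0 : 0 ≤ p j - p i := by
      have : p i ≤ p j := hmono (by simp [i, j, Fin.le_def])
      linarith
    have hE : μ {x | x i = x j} = ENNReal.ofReal (1 - (p j - p i)) := hmax l h
    have hEc : μ {x | x i = x j}ᶜ = ENNReal.ofReal (p j - p i) := by
      rw [prob_compl_eq_one_sub (hms _), hE]
      rw [show (1 : ENNReal) = ENNReal.ofReal 1 by simp,
        ← ENNReal.ofReal_sub _ (by linarith [h1 j, h0 i] : (0:ℝ) ≤ 1 - (p j - p i))]
      ring_nf
    have hsplit : {x : Fin k → Bool | x i = x j}ᶜ = (T \ U) ∪ (U \ T) := by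
      ext x
      simp only [Set.mem_compl_iff, Set.mem_setOf_eq, Set.mem_union, Set.mem_diff,
        Set.mem_setOf_eq, T, U]
      cases hxi : x i <;> cases hxj : x j <;> simp
    have hdisj : Disjoint (T \ U) (U \ T) := by
      apply Set.disjoint_left.2
      rintro x ⟨hxT, hxU⟩ ⟨hxU', _⟩
      exact hxU hxU'
    have hsum : μ (T \ U) + μ (U \ T) = ENNReal.ofReal (p j - p i) := by
      rw [← measure_union hdisj (hms _), ← hsplit, hEc]
    have hT : μ (T ∩ U) + μ (T \ U) = ENNReal.ofReal (p i) := by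
      rw [measure_inter_add_diff T (hms U)]; exact hmarg i
    have hU : μ (U ∩ T) + μ (U \ T) = ENNReal.ofReal (p j) := by
      rw [measure_inter_add_diff U (hms T)]; exact hmarg j
    have hadd : ENNReal.ofReal (p i) + ENNReal.ofReal (p j - p i) = ENNReal.ofReal (p j) := by
      rw [← ENNReal.ofReal_add (h0 i) hd0]; ring_nf
    have key : μ (U ∩ T) + μ (U \ T) + (μ (T \ U) + μ (T \ U)) =
        μ (U ∩ T) + μ (U \ T) + 0 := by
      rw [add_zero]
      have e1 : (μ (T ∩ U) + μ (T \ U)) + (μ (T \ U) + μ (U \ T)) =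
          μ (U ∩ T) + μ (U \ T) := by
        rw [hT, hsum, hadd, ← hU]
      calc μ (U ∩ T) + μ (U \ T) + (μ (T \ U) + μ (T \ U))
          = (μ (T ∩ U) + μ (T \ U)) + (μ (T \ U) + μ (U \ T)) := by
            rw [Set.inter_comm U T]; ring
        _ = _ := e1
    have hfin : μ (U ∩ T) + μ (U \ T) ≠ ⊤ := by
      rw [hU]; exact ENNReal.ofReal_ne_top
    have := (ENNReal.add_right_inj hfin).1 key
    simpa using this
  -- main reverse induction
  have main : ∀ n : ℕ, ∀ l : Fin k, k - 1 - l.val ≤ n →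
      μ {x | ∀ m : Fin k, l ≤ m → x m = true} = ENNReal.ofReal (p l) := by
    intro n
    induction n with
    | zero =>
      intro l hl
      have hlval : l.val = k - 1 := by omega
      have hset : {x : Fin k → Bool | ∀ m : Fin k, l ≤ m → x m = true} = {x | x l = true} := by
        ext x
        constructor
        · intro hx; exact hx l le_rfl
        · intro hx m hm
          have : m = l := by
            apply Fin.ext
            have h1 := m.isLt
            have h2 : l.val ≤ m.val := hm
            omega
          rw [this]; exact hx
      rw [hset]; exact hmarg l
    | succ n ih =>
      intro l hl
      by_cases hcase : k - 1 - l.val ≤ n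
      · exact ih l hcase
      · have hlt : l.val + 1 < k := by omega
        set l' : Fin k := ⟨l.val + 1, hlt⟩
        have hll' : l = ⟨l.val, Nat.lt_of_succ_lt hlt⟩ := by apply Fin.ext; rfl
        have ihl' : μ {x | ∀ m : Fin k, l' ≤ m → x m = true} = ENNReal.ofReal (p l') := by
          apply ih l'; simp only [l']; omega
        set A : Set (Fin k → Bool) := {x | ∀ m : Fin k, l' ≤ m → x m = true}
        set T : Set (Fin k → Bool) := {x | x l = true}
        set U : Set (Fin k → Bool) := {x | x l' = true}
        have hAU : A ⊆ U := fun x hx => hx l' le_rfl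
        have hUA : μ (U \ A) = 0 := by
          have h1' : μ U = ENNReal.ofReal (p l') := hmarg l'
          have h2' : μ A + μ (U \ A) = μ U := by
            rw [← measure_inter_add_diff U (hms A), Set.inter_eq_right.2 hAU]
          rw [h1', ihl'] at h2'
          have hfin : ENNReal.ofReal (p l') ≠ ⊤ := ENNReal.ofReal_ne_top
          nth_rewrite 2 [show ENNReal.ofReal (p l') = ENNReal.ofReal (p l') + 0 by simp] at h2'
          exact (ENNReal.add_right_inj hfin).1 h2'
        have hTU : μ (T \ U) = 0 := by
          have := hnull l.val hlt
          rw [← hll'] at this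
          exact this
        have hTA : μ (T \ A) = 0 := by
          have hsub : T \ A ⊆ (T \ U) ∪ (U \ A) := by
            rintro x ⟨hxT, hxA⟩
            by_cases hxU : x ∈ U
            · exact Or.inr ⟨hxU, hxA⟩
            · exact Or.inl ⟨hxT, hxU⟩
          exact le_antisymm (le_trans (measure_mono hsub)
            (le_trans (measure_union_le _ _) (by rw [hTU, hUA]; simp))) zero_le
        have hset : {x : Fin k → Bool | ∀ m : Fin k, l ≤ m → x m = true} = T ∩ A := by
          ext x
          constructor
          · intro hx
            refine ⟨hx l le_rfl, fun m hm => hx m ?_⟩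
            exact le_trans (by simp [l', Fin.le_def]) hm
          · rintro ⟨hxT, hxA⟩ m hm
            rcases eq_or_lt_of_le hm with heq | hlt'
            · rw [← heq]; exact hxT
            · exact hxA m (by simp only [l', Fin.le_def]; exact hlt')
        rw [hset]
        have hle : μ (T ∩ A) ≤ μ T := measure_mono Set.inter_subset_left
        have hge : μ T ≤ μ (T ∩ A) := by
          calc μ T ≤ μ (T ∩ A) + μ (T \ A) := measure_le_inter_add_diff μ T A
          _ = μ (T ∩ A) := by rw [hTA, add_zero]
        rw [le_antisymm hle hge]
        exact hmarg l
  intro l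
  exact main (k - 1 - l.val) l le_rfl
end

section
/- Fix k ≥ 2 and p : Fin k → ℝ with 0 ≤ p 0 ≤ p 1 ≤ … ≤ p (k−1) ≤ 1. If μ is a coupling of p such that μ {x | x l = x (l+1)} = 1 − (p (l+1) − p l) for every l with 0 ≤ l ≤ k−2, then μ equals the threshold measure ν of the ordered marginals p (the measure assigning mass p 0 to the all-true vector, mass p l − p (l−1) to the vector that is false on coordinates < l and true on coordinates ≥ l for 1 ≤ l ≤ k−1, and mass 1 − p (k−1) to the all-false vector). In particular, a coupling of p whose every consecutive pair is maximal is unique. -/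
open MeasureTheory

lemma allMeas {k : ℕ} (s : Set (Fin k → Bool)) : MeasurableSet s := s.toFinite.measurableSet

lemma measSum {k : ℕ} (μ : Measure (Fin k → Bool)) (s : Finset (Fin k → Bool)) :
    μ ↑s = ∑ x ∈ s, μ {x} := by
  rw [show (↑s : Set (Fin k → Bool)) = ⋃ x ∈ s, {x} by ext y; simp]
  exact measure_biUnion_finset
    (by intro a _ b _ hab; simp only [Set.disjoint_singleton]; exact hab)
    (fun _ _ => allMeas _)

lemma thresholdVec_inj {k : ℕ} {l l' : ℕ} (hl : l ≤ k) (hl' : l' ≤ k)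
    (h : thresholdVec k l = thresholdVec k l') : l = l' := by
  have aux : ∀ a b : ℕ, a < b → b ≤ k → thresholdVec k a ≠ thresholdVec k b := by
    intro a b hab hbk hEq
    have hak : a < k := lt_of_lt_of_le hab hbk
    have := congrFun hEq ⟨a, hak⟩
    simp only [thresholdVec, decide_eq_decide] at this
    omega
  rcases lt_trichotomy l l' with hc | hc | hc
  · exact absurd h (aux l l' hc hl')
  · exact hc
  · exact absurd h.symm (aux l' l hc hl)

lemma thresholdVec_classify {k : ℕ} (x : Fin k → Bool)
    (hnd : ∀ (l : ℕ) (h : l + 1 < k),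
      ¬(x ⟨l, Nat.lt_of_succ_lt h⟩ = true ∧ x ⟨l + 1, h⟩ = false)) :
    ∃ l ≤ k, x = thresholdVec k l := by
  classical
  by_cases hall : ∀ i : Fin k, x i = false
  · refine ⟨k, le_refl k, funext fun i => ?_⟩
    simp [thresholdVec, hall i, Nat.not_le.mpr i.isLt]
  · push_neg at hall
    obtain ⟨i, hi⟩ := hall
    have hex : ∃ n, ∃ h : n < k, x ⟨n, h⟩ = true :=
      ⟨i.val, i.isLt, by simpa [Bool.not_eq_false] using hi⟩
    obtain ⟨hlk, hxl⟩ := Nat.find_spec hex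
    set l := Nat.find hex with hl
    have haux : ∀ n, l ≤ n → ∀ h : n < k, x ⟨n, h⟩ = true := by
      intro n hn
      induction n, hn using Nat.le_induction with
      | base => intro h; exact hxl
      | succ n hn ih =>
        intro h
        have h1 : n + 1 < k := h
        have h2 := ih (Nat.lt_of_succ_lt h1)
        have := hnd n h1
        by_contra hfalse
        exact this ⟨h2, by simpa [Bool.not_eq_true] using hfalse⟩
    refine ⟨l, hlk.le, funext fun j => ?_⟩
    by_cases hj : l ≤ j.val
    · have := haux j.val hj j.isLt
      simp [thresholdVec, hj]
      simpa using this
    · have hmin := Nat.find_min hex (show j.val < l from Nat.not_le.mp hj)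
      push_neg at hmin
      have := hmin j.isLt
      simp [thresholdVec, hj]
      simpa [Bool.not_eq_true] using this



lemma descent_zero {k : ℕ} (p : Fin k → ℝ)
    (h0 : ∀ i, 0 ≤ p i) (h1 : ∀ i, p i ≤ 1)
    (μ : Measure (Fin k → Bool)) (hprob : IsProbabilityMeasure μ)
    (hmarg : ∀ i, μ {x | x i = true} = ENNReal.ofReal (p i))
    (i j : Fin k) (hij : p i ≤ p j)
    (hagree : μ {x | x i = x j} = ENNReal.ofReal (1 - (p j - p i))) :
    μ {x | x i = true ∧ x j = false} = 0 := by
  haveI := hprob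
  set STT : Set (Fin k → Bool) := {x | x i = true ∧ x j = true} with hSTT
  set STF : Set (Fin k → Bool) := {x | x i = true ∧ x j = false} with hSTF
  set SFT : Set (Fin k → Bool) := {x | x i = false ∧ x j = true} with hSFT
  set SFF : Set (Fin k → Bool) := {x | x i = false ∧ x j = false} with hSFF
  have hdTF : Disjoint STT STF := by
    rw [Set.disjoint_left]; rintro x ⟨_, h1⟩ ⟨_, h2⟩; simp [h1] at h2
  have hdFT : Disjoint STT SFT := by
    rw [Set.disjoint_left]; rintro x ⟨h1, _⟩ ⟨h2, _⟩; simp [h1] at h2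
  have hdFF : Disjoint STT SFF := by
    rw [Set.disjoint_left]; rintro x ⟨h1, _⟩ ⟨h2, _⟩; simp [h1] at h2
  have hdFTFF : Disjoint SFT SFF := by
    rw [Set.disjoint_left]; rintro x ⟨_, h1⟩ ⟨_, h2⟩; simp [h1] at h2
  have hu1 : {x : Fin k → Bool | x i = true} = STT ∪ STF := by
    ext x; cases hxj : x j <;> simp [hSTT, hSTF, hxj]
  have hu2 : {x : Fin k → Bool | x j = true} = STT ∪ SFT := by
    ext x; cases hxi : x i <;> simp [hSTT, hSFT, hxi]
  have hu3 : {x : Fin k → Bool | x i = x j} = STT ∪ SFF := by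
    ext x; cases hxi : x i <;> cases hxj : x j <;> simp [hSTT, hSFF, hxi, hxj]
  have hu4 : {x : Fin k → Bool | x i = true}ᶜ = SFT ∪ SFF := by
    ext x; cases hxi : x i <;> cases hxj : x j <;> simp [hSFT, hSFF, hxi, hxj]
  have e1 : μ STT + μ STF = ENNReal.ofReal (p i) := by
    rw [← measure_union hdTF (allMeas _), ← hu1, hmarg]
  have e2 : μ STT + μ SFT = ENNReal.ofReal (p j) := by
    rw [← measure_union hdFT (allMeas _), ← hu2, hmarg]
  have e3 : μ STT + μ SFF = ENNReal.ofReal (1 - (p j - p i)) := by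
    rw [← measure_union hdFF (allMeas _), ← hu3, hagree]
  have e4 : ENNReal.ofReal (p i) + (μ SFT + μ SFF) = 1 := by
    rw [← hmarg i, ← measure_union hdFTFF (allMeas _), ← hu4,
      measure_add_measure_compl (allMeas _)]
    exact measure_univ
  -- pass to real numbers
  set a := (μ STT).toReal with ha
  set b := (μ STF).toReal with hb
  set c := (μ SFT).toReal with hc
  set d := (μ SFF).toReal with hd
  have fTT := measure_ne_top μ STT
  have fTF := measure_ne_top μ STF
  have fFT := measure_ne_top μ SFT
  have fFF := measure_ne_top μ SFF
  have r1 : a + b = p i := by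
    have := congrArg ENNReal.toReal e1
    rwa [ENNReal.toReal_add fTT fTF, ENNReal.toReal_ofReal (h0 i)] at this
  have r2 : a + c = p j := by
    have := congrArg ENNReal.toReal e2
    rwa [ENNReal.toReal_add fTT fFT, ENNReal.toReal_ofReal (h0 j)] at this
  have r3 : a + d = 1 - (p j - p i) := by
    have := congrArg ENNReal.toReal e3
    rwa [ENNReal.toReal_add fTT fFF,
      ENNReal.toReal_ofReal (by have := h1 j; have := h0 i; linarith)] at this
  have r4 : p i + (c + d) = 1 := by
    have := congrArg ENNReal.toReal e4
    rwa [ENNReal.toReal_add (by simp) (ENNReal.add_ne_top.mpr ⟨fFT, fFF⟩),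
      ENNReal.toReal_add fFT fFF, ENNReal.toReal_ofReal (h0 i), ENNReal.toReal_one] at this
  have hb0 : b = 0 := by linarith
  have := (ENNReal.toReal_eq_zero_iff _).mp hb0
  tauto

/-- If a coupling `μ` of ordered Bernoulli marginals `0 ≤ p 0 ≤ … ≤ p (k-1) ≤ 1` (`k ≥ 2`)
makes every consecutive pair of coordinates a maximal coupling, then `μ` equals the threshold
measure; in particular such a coupling is unique. -/
theorem stmt10 (k : ℕ) (hk : 2 ≤ k) (p : Fin k → ℝ) (hmono : Monotone p)
    (h0 : ∀ i, 0 ≤ p i) (h1 : ∀ i, p i ≤ 1)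
    (μ : Measure (Fin k → Bool)) (hμ : IsCoupling p μ)
    (hmax : ∀ (l : ℕ) (h : l + 1 < k),
      μ {x | x ⟨l, Nat.lt_of_succ_lt h⟩ = x ⟨l + 1, h⟩} =
        ENNReal.ofReal (1 - (p ⟨l + 1, h⟩ - p ⟨l, Nat.lt_of_succ_lt h⟩))) :
    μ = thresholdMeasure p := by
  classical
  obtain ⟨hprob, hmarg⟩ := hμ
  haveI := hprob
  -- Step 1: μ vanishes off the threshold vectors
  have hzero : ∀ x : Fin k → Bool, (∀ l ≤ k, x ≠ thresholdVec k l) → μ {x} = 0 := by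
    intro x hx
    have hnd : ¬ ∀ (l : ℕ) (h : l + 1 < k),
        ¬(x ⟨l, Nat.lt_of_succ_lt h⟩ = true ∧ x ⟨l + 1, h⟩ = false) := by
      intro hnd
      obtain ⟨l, hl, hxl⟩ := thresholdVec_classify x hnd
      exact hx l hl hxl
    push_neg at hnd
    obtain ⟨l, h, hT, hF⟩ := hnd
    have hz := descent_zero p h0 h1 μ hprob hmarg ⟨l, Nat.lt_of_succ_lt h⟩ ⟨l + 1, h⟩
      (hmono (by simp [Fin.mk_le_mk])) (hmax l h)
    refine measure_mono_null ?_ hz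
    intro y hy
    rw [Set.mem_singleton_iff] at hy
    subst hy
    exact ⟨hT, hF⟩
  set a : ℕ → ENNReal := fun l => μ {thresholdVec k l} with ha
  -- marginal sums
  have margsum : ∀ j : Fin k, ∑ l ∈ Finset.range (j.val + 1), a l = ENNReal.ofReal (p j) := by
    intro j
    rw [← hmarg j]
    have hset : {x : Fin k → Bool | x j = true}
        = ↑(Finset.univ.filter fun x : Fin k → Bool => x j = true) := by ext y; simp
    rw [hset, measSum]
    have hinj : ∀ l ∈ Finset.range (j.val + 1), ∀ l' ∈ Finset.range (j.val + 1),
        thresholdVec k l = thresholdVec k l' → l = l' := by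
      intro l hl l' hl' hEq
      simp only [Finset.mem_range] at hl hl'
      have := j.isLt
      exact thresholdVec_inj (by omega) (by omega) hEq
    rw [← Finset.sum_image (f := fun x => μ {x}) (g := thresholdVec k) hinj]
    refine Finset.sum_subset ?_ ?_
    · intro x hxT
      simp only [Finset.mem_image, Finset.mem_range] at hxT
      obtain ⟨l, hl, rfl⟩ := hxT
      simp only [Finset.mem_filter, Finset.mem_univ, true_and, thresholdVec]
      exact decide_eq_true (by omega)
    · intro x hxF hxT
      apply hzero
      intro l hl hEq
      subst hEq
      simp only [Finset.mem_filter, Finset.mem_univ, true_and, thresholdVec] at hxF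
      have hlj := of_decide_eq_true hxF
      exact absurd (Finset.mem_image.mpr ⟨l, Finset.mem_range.mpr (by omega), rfl⟩) hxT
  have total : ∑ l ∈ Finset.range (k + 1), a l = 1 := by
    rw [← measure_univ (μ := μ)]
    have hset : (Set.univ : Set (Fin k → Bool)) = ↑(Finset.univ : Finset (Fin k → Bool)) := by
      simp
    rw [hset, measSum]
    have hinj : ∀ l ∈ Finset.range (k + 1), ∀ l' ∈ Finset.range (k + 1),
        thresholdVec k l = thresholdVec k l' → l = l' := by
      intro l hl l' hl' hEq
      simp only [Finset.mem_range] at hl hl'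
      exact thresholdVec_inj (by omega) (by omega) hEq
    rw [← Finset.sum_image (f := fun x => μ {x}) (g := thresholdVec k) hinj]
    refine Finset.sum_subset (Finset.subset_univ _) ?_
    intro x _ hxT
    apply hzero
    intro l hl hEq
    subst hEq
    exact hxT (Finset.mem_image.mpr ⟨l, Finset.mem_range.mpr (by omega), rfl⟩)
  -- values of a
  have ha0 : a 0 = ENNReal.ofReal (p ⟨0, by omega⟩) := by
    have := margsum ⟨0, by omega⟩
    simpa using this
  have hastep : ∀ (n : ℕ) (h : n + 1 < k),
      a (n + 1) = ENNReal.ofReal (p ⟨n + 1, h⟩ - p ⟨n, Nat.lt_of_succ_lt h⟩) := by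
    intro n h
    have h2 := margsum ⟨n + 1, h⟩
    have h1' := margsum ⟨n, Nat.lt_of_succ_lt h⟩
    rw [Finset.sum_range_succ] at h2
    simp only at h1' h2
    rw [h1'] at h2
    have hmono' : p ⟨n, Nat.lt_of_succ_lt h⟩ ≤ p ⟨n + 1, h⟩ := hmono (by simp [Fin.mk_le_mk])
    have hsplit : ENNReal.ofReal (p ⟨n + 1, h⟩)
        = ENNReal.ofReal (p ⟨n, Nat.lt_of_succ_lt h⟩)
          + ENNReal.ofReal (p ⟨n + 1, h⟩ - p ⟨n, Nat.lt_of_succ_lt h⟩) := by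
      rw [← ENNReal.ofReal_add (h0 _) (by linarith)]
      ring_nf
    rw [hsplit] at h2
    exact (ENNReal.add_right_inj ENNReal.ofReal_ne_top).mp h2
  have hklt : k - 1 < k := by omega
  have hak : a k = ENNReal.ofReal (1 - p ⟨k - 1, hklt⟩) := by
    have h2 := total
    rw [Finset.sum_range_succ] at h2
    have h1' := margsum ⟨k - 1, hklt⟩
    have : (⟨k - 1, hklt⟩ : Fin k).val + 1 = k := by simp; omega
    rw [this] at h1'
    rw [h1'] at h2
    have hsplit : (1 : ENNReal)
        = ENNReal.ofReal (p ⟨k - 1, hklt⟩) + ENNReal.ofReal (1 - p ⟨k - 1, hklt⟩) := by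
      rw [← ENNReal.ofReal_add (h0 _) (by have := h1 ⟨k - 1, hklt⟩; linarith)]
      simp
    rw [hsplit] at h2
    exact (ENNReal.add_right_inj ENNReal.ofReal_ne_top).mp h2
  have haval : ∀ l ≤ k, a l = ENNReal.ofReal
      (if l = 0 then pext p 0 else if l = k then 1 - pext p (k - 1)
       else pext p l - pext p (l - 1)) := by
    intro l hl
    rcases Nat.eq_zero_or_pos l with rfl | hpos
    · rw [if_pos rfl, ha0]
      congr 1
      simp [pext, show 0 < k by omega]
    · rcases eq_or_ne l k with rfl | hne
      · rw [if_neg (by omega), if_pos rfl, hak]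
        congr 1
        simp [pext, hklt]
      · have hlk : l < k := lt_of_le_of_ne hl hne
        obtain ⟨n, rfl⟩ := Nat.exists_eq_add_of_lt hpos
        simp only [Nat.zero_add] at *
        have hn1 : n + 1 < k := by omega
        rw [if_neg (by omega), if_neg hne, hastep n hn1]
        congr 1
        simp [pext, hn1, Nat.lt_of_succ_lt hn1]
  -- conclusion by extensionality on singletons
  apply MeasureTheory.Measure.ext_of_singleton
  intro x
  have hRHS : thresholdMeasure p {x} = ∑ l ∈ Finset.range (k + 1),
      ENNReal.ofReal
        (if l = 0 then pext p 0
         else if l = k then 1 - pext p (k - 1)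
         else pext p l - pext p (l - 1)) * ({x} : Set _).indicator 1 (thresholdVec k l) := by
    rw [thresholdMeasure, Measure.finset_sum_apply]
    refine Finset.sum_congr rfl fun l _ => ?_
    rw [Measure.smul_apply, Measure.dirac_apply, smul_eq_mul]
  by_cases hx : ∃ l ≤ k, x = thresholdVec k l
  · obtain ⟨l₀, hl₀, rfl⟩ := hx
    rw [hRHS, Finset.sum_eq_single_of_mem l₀ (Finset.mem_range.mpr (by omega))
      (fun l hl hne => by
        rw [Set.indicator_of_notMem, mul_zero]
        intro hmem
        rw [Set.mem_singleton_iff] at hmem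
        exact hne (thresholdVec_inj (by simp at hl; omega) hl₀ hmem))]
    rw [show ({thresholdVec k l₀} : Set (Fin k → Bool)).indicator
        (1 : (Fin k → Bool) → ENNReal) (thresholdVec k l₀) = 1 by simp, mul_one]
    exact haval l₀ hl₀
  · push_neg at hx
    rw [hzero x hx, hRHS]
    apply (Finset.sum_eq_zero fun l hl => ?_).symm
    rw [Set.indicator_of_notMem, mul_zero]
    intro hmem
    rw [Set.mem_singleton_iff] at hmem
    exact hx l (by simp at hl; omega) hmem.symm
end

section
/- Let (μ_1, μ_2, μ_3) be a cyclic system of rank 3 with binary ±1 measurements such that each μ_i is supported on the anti-diagonal {(1,−1), (−1,1)} (i.e., within every context the two measurements are equal to opposite values with probability 1, as in Specker's magic boxes). Then the system is noncontextual if and only if ∑_{i=1}^{3} |⟨R_i^i⟩ − ⟨R_i^{i⊖1}⟩| ≥ 2. -/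
open MeasureTheory

/-- The two-point value space `{-1, 1} ⊆ ℝ` of a binary ±1 measurement. -/
abbrev PM : Set ℝ := {-1, 1}

/-- `⟨R_i^i⟩`: the expectation of the first coordinate under `μ i`. -/
noncomputable def E1 {n : ℕ} (μ : Fin n → Measure (PM × PM)) (i : Fin n) : ℝ :=
  ∫ x, (x.1 : ℝ) ∂(μ i)

/-- The expectation of the second coordinate under `μ i` (so `⟨R_i^{i⊖1}⟩ = E2 μ (i - 1)`). -/
noncomputable def E2 {n : ℕ} (μ : Fin n → Measure (PM × PM)) (i : Fin n) : ℝ :=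
  ∫ x, (x.2 : ℝ) ∂(μ i)

/-- `⟨R_i^i R_{i⊕1}^i⟩`: the expectation of the product of the coordinates under `μ i`. -/
noncomputable def E12 {n : ℕ} (μ : Fin n → Measure (PM × PM)) (i : Fin n) : ℝ :=
  ∫ x, (x.1 : ℝ) * (x.2 : ℝ) ∂(μ i)

/-- A coupling of the cyclic system `μ`: a probability measure on `Fin n → PM × PM`
whose `i`-th coordinate marginal is `μ i`. -/
def IsSysCoupling {n : ℕ} (μ : Fin n → Measure (PM × PM))
    (S : Measure (Fin n → PM × PM)) : Prop :=
  IsProbabilityMeasure S ∧ ∀ i : Fin n, S.map (fun f => f i) = μ i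

/-- A cyclic system is noncontextual if it has a coupling in which, for every `i`, the two
measurements of property `q_i` (in contexts `c_i` and `c_{i⊖1}`) are equal with the maximal
possible probability `1 - |⟨R_i^i⟩ - ⟨R_i^{i⊖1}⟩| / 2`. -/
def Noncontextual {n : ℕ} [NeZero n] (μ : Fin n → Measure (PM × PM)) : Prop :=
  ∃ S : Measure (Fin n → PM × PM), IsSysCoupling μ S ∧
    ∀ i : Fin n, S {f | (f i).1 = (f (i - 1)).2} =
      ENNReal.ofReal (1 - |E1 μ i - E2 μ (i - 1)| / 2)

namespace S15

noncomputable section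

def p1 : PM := ⟨1, by norm_num⟩
def m1 : PM := ⟨-1, by norm_num⟩
def X0 : PM × PM := (p1, m1)
def X1 : PM × PM := (m1, p1)

instance : Finite PM := inferInstanceAs (Finite (insert (-1) {1} : Set ℝ))

lemma pm_cases (x : PM) : x = p1 ∨ x = m1 := by
  obtain ⟨v, hv⟩ := x
  rcases hv with h | h
  · right; exact Subtype.ext h
  · left; exact Subtype.ext h

@[simp] lemma p1_ne_m1 : (p1 = m1) ↔ False := by
  constructor
  · intro h
    have : (1:ℝ) = -1 := congrArg Subtype.val h
    norm_num at this
  · exact False.elim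

@[simp] lemma m1_ne_p1 : (m1 = p1) ↔ False := by
  constructor
  · intro h
    have : (-1:ℝ) = 1 := congrArg Subtype.val h
    norm_num at this
  · exact False.elim

lemma meas_all {α : Type*} [MeasurableSpace α] [Countable α] [MeasurableSingletonClass α]
    (s : Set α) : MeasurableSet s := (Set.to_countable s).measurableSet

lemma meas_fun {α β : Type*} [MeasurableSpace α] [MeasurableSpace β] [Countable α]
    [MeasurableSingletonClass α] (f : α → β) : Measurable f := fun _ _ => meas_all _

abbrev Anti : Set (PM × PM) := {x | (x.1 : ℝ) = -(x.2 : ℝ)}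

lemma anti_eq : Anti = {X0, X1} := by
  ext x
  constructor
  · intro hx
    rcases pm_cases x.1 with h1 | h1 <;> rcases pm_cases x.2 with h2 | h2
    · exfalso
      have e1 : ((x.1 : ℝ)) = 1 := congrArg Subtype.val h1
      have e2 : ((x.2 : ℝ)) = 1 := congrArg Subtype.val h2
      have hx' : ((x.1 : ℝ)) = -((x.2 : ℝ)) := hx
      rw [e1, e2] at hx'; norm_num at hx'
    · left
      exact Prod.ext h1 h2
    · right
      exact Prod.ext h1 h2
    · exfalso
      have e1 : ((x.1 : ℝ)) = -1 := congrArg Subtype.val h1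
      have e2 : ((x.2 : ℝ)) = -1 := congrArg Subtype.val h2
      have hx' : ((x.1 : ℝ)) = -((x.2 : ℝ)) := hx
      rw [e1, e2] at hx'; norm_num at hx'
  · intro hx
    rcases hx with h | h <;> subst h <;> simp [Anti, X0, X1, p1, m1]

variable {ν : Measure (PM × PM)} [IsProbabilityMeasure ν]

lemma null_compl (h : ν Anti = 1) : ν Antiᶜ = 0 := by
  have := measure_compl (meas_all Anti) (by simp : ν Anti ≠ ⊤)
  rw [h] at this
  simpa using this

lemma null_pp (h : ν Anti = 1) : ν {(p1, p1)} = 0 := by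
  refine measure_mono_null ?_ (null_compl h)
  intro x hx
  simp only [Set.mem_singleton_iff] at hx
  subst hx
  simp [Anti, p1]
  norm_num

lemma null_mm (h : ν Anti = 1) : ν {(m1, m1)} = 0 := by
  refine measure_mono_null ?_ (null_compl h)
  intro x hx
  simp only [Set.mem_singleton_iff] at hx
  subst hx
  simp [Anti, m1]
  norm_num

lemma k_le_one : ν {X0} ≤ 1 := (measure_mono (Set.subset_univ _)).trans (by simp)

lemma k1_eq (h : ν Anti = 1) : ν {X1} = 1 - ν {X0} := by
  have hd : ν ({X0} ∪ {X1}) = ν {X0} + ν {X1} := by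
    refine measure_union ?_ (meas_all _)
    simp only [Set.disjoint_singleton, X0, X1, ne_eq, Prod.mk.injEq, not_and]
    intro h _; exact p1_ne_m1.mp h
  have hu : ν ({X0} ∪ {X1}) = 1 := by
    have : ({X0} ∪ {X1} : Set (PM × PM)) = Anti := by rw [anti_eq]; rfl
    rw [this, h]
  rw [hu] at hd
  have h0 : ν {X0} ≤ 1 := k_le_one
  have h0t : ν {X0} ≠ ⊤ := by
    intro ht; rw [ht] at h0; simp at h0
  rw [hd]
  exact (ENNReal.add_sub_cancel_left h0t).symm

lemma E2_eq_neg (h : ν Anti = 1) :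
    (∫ x, (x.2 : ℝ) ∂ν) = -(∫ x, (x.1 : ℝ) ∂ν) := by
  have hae : (fun x : PM × PM => (x.2 : ℝ)) =ᵐ[ν] (fun x => -(x.1 : ℝ)) := by
    have : ∀ x ∈ Anti, (x.2 : ℝ) = -(x.1 : ℝ) := by
      intro x hx
      have : ((x.1 : ℝ)) = -((x.2 : ℝ)) := hx
      linarith
    refine Filter.eventuallyEq_of_mem ?_ this
    rw [mem_ae_iff]
    exact null_compl h
  rw [integral_congr_ae hae, integral_neg]

lemma E1_eq (h : ν Anti = 1) :
    (∫ x, (x.1 : ℝ) ∂ν) = 2 * (ν {X0}).toReal - 1 := by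
  have hBmeas : MeasurableSet {y : PM × PM | y.1 = p1} := meas_all _
  have hfun : (fun x : PM × PM => (x.1 : ℝ)) =
      fun x => 2 * Set.indicator {y : PM × PM | y.1 = p1} (fun _ => (1:ℝ)) x - 1 := by
    funext x
    rcases pm_cases x.1 with h1 | h1
    · have e1 : ((x.1 : ℝ)) = 1 := congrArg Subtype.val h1
      rw [Set.indicator_of_mem (show x ∈ {y : PM × PM | y.1 = p1} from h1), e1]; ring
    · have e1 : ((x.1 : ℝ)) = -1 := congrArg Subtype.val h1
      have : x.1 ≠ p1 := by rw [h1]; exact fun hc => p1_ne_m1.mp hc.symm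
      rw [Set.indicator_of_notMem (show x ∉ {y : PM × PM | y.1 = p1} from this), e1]; ring
  have hint : Integrable (Set.indicator {y : PM × PM | y.1 = p1} (fun _ => (1:ℝ))) ν :=
    (integrable_const (1:ℝ)).indicator hBmeas
  have hB : ν {y : PM × PM | y.1 = p1} = ν {X0} := by
    refine le_antisymm ?_ (measure_mono ?_)
    · have hsub : {y : PM × PM | y.1 = p1} ⊆ {X0} ∪ {(p1, p1)} := by
        intro y hy
        rcases pm_cases y.2 with h2 | h2
        · right
          simp only [Set.mem_singleton_iff]
          exact Prod.ext hy h2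
        · left
          simp only [Set.mem_singleton_iff]
          exact Prod.ext hy h2
      calc ν {y : PM × PM | y.1 = p1} ≤ ν ({X0} ∪ {(p1, p1)}) := measure_mono hsub
        _ ≤ ν {X0} + ν {(p1, p1)} := measure_union_le _ _
        _ = ν {X0} := by rw [null_pp h, add_zero]
    · intro y hy
      simp only [Set.mem_singleton_iff] at hy
      subst hy; rfl
  rw [hfun, integral_sub (hint.const_mul 2) (integrable_const 1)]
  rw [integral_const_mul, integral_indicator_const (1:ℝ) hBmeas, Measure.real, hB]
  simp

lemma exists_t (a0 a1 a2 r0 r1 r2 : ℝ)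
    (hr0 : r0 = |a0 + a2| - 1) (hr1 : r1 = |a1 + a0| - 1) (hr2 : r2 = |a2 + a1| - 1)
    (hb0 : -1 ≤ a0) (hb0' : a0 ≤ 1) (hb1 : -1 ≤ a1) (hb1' : a1 ≤ 1)
    (hb2 : -1 ≤ a2) (hb2' : a2 ≤ 1)
    (hs : 2 ≤ |a0 + a2| + |a1 + a0| + |a2 + a1|) :
    ∃ t : ℝ,
      0 ≤ 1 + a0 + a1 + a2 + r0 + r1 + r2 + t ∧
      0 ≤ 1 + a0 + a1 - a2 - r0 + r1 - r2 - t ∧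
      0 ≤ 1 + a0 - a1 + a2 + r0 - r1 - r2 - t ∧
      0 ≤ 1 + a0 - a1 - a2 - r0 - r1 + r2 + t ∧
      0 ≤ 1 - a0 + a1 + a2 - r0 - r1 + r2 - t ∧
      0 ≤ 1 - a0 + a1 - a2 + r0 - r1 - r2 + t ∧
      0 ≤ 1 - a0 - a1 + a2 - r0 + r1 - r2 + t ∧
      0 ≤ 1 - a0 - a1 - a2 + r0 + r1 + r2 - t := by
  subst hr0 hr1 hr2
  rcases abs_cases (a0 + a2) with ⟨e0, f0⟩ | ⟨e0, f0⟩ <;>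
    rcases abs_cases (a1 + a0) with ⟨e1, f1⟩ | ⟨e1, f1⟩ <;>
      rcases abs_cases (a2 + a1) with ⟨e2, f2⟩ | ⟨e2, f2⟩ <;>
        rw [e0, e1, e2] at hs ⊢ <;>
          first
            | exact ⟨a0 + a1 + a2 - 2, by linarith, by linarith, by linarith, by linarith,
                by linarith, by linarith, by linarith, by linarith⟩
            | exact ⟨a0 + a1 + a2 + 2, by linarith, by linarith, by linarith, by linarith,
                by linarith, by linarith, by linarith, by linarith⟩
            | exact ⟨-(a0 + a1 + a2), by linarith, by linarith, by linarith, by linarith,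
                by linarith, by linarith, by linarith, by linarith⟩


def pmOf (b : Bool) : PM := if b then p1 else m1
def sg (b : Bool) : ℝ := if b then 1 else -1

def gfun (s : Bool × Bool × Bool) : Fin 3 → PM × PM :=
  ![(pmOf s.1, pmOf (!s.1)), (pmOf s.2.1, pmOf (!s.2.1)), (pmOf s.2.2, pmOf (!s.2.2))]

lemma sum_apply' {ι : Type*} [Fintype ι] {X : Type*} [MeasurableSpace X] [Countable X]
    [MeasurableSingletonClass X] (W : ι → ℝ) (g : ι → X) (hW : ∀ s, 0 ≤ W s) (E : Set X)
    [DecidablePred (· ∈ E)] :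
    (∑ s : ι, ENNReal.ofReal (W s) • Measure.dirac (g s)) E =
      ENNReal.ofReal (∑ s : ι, if g s ∈ E then W s else 0) := by
  rw [Measure.finset_sum_apply]
  rw [ENNReal.ofReal_sum_of_nonneg (fun s _ => by by_cases h : g s ∈ E <;> simp [h, hW s])]
  refine Finset.sum_congr rfl fun s _ => ?_
  rw [Measure.smul_apply, smul_eq_mul, Measure.dirac_apply]
  by_cases h : g s ∈ E
  · simp [h, Set.indicator_of_mem h]
  · simp [h, Set.indicator_of_notMem h]

end
end S15

set_option maxHeartbeats 1600000 in
/-- A cyclic system of rank 3 whose every context is supported on the anti-diagonal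
`{(1,-1), (-1,1)}` (Specker's magic boxes) is noncontextual if and only if
`∑ |⟨R_i^i⟩ - ⟨R_i^{i⊖1}⟩| ≥ 2`. -/
theorem stmt15 (μ : Fin 3 → Measure (PM × PM)) [∀ i, IsProbabilityMeasure (μ i)]
    (hanti : ∀ i, μ i {x | (x.1 : ℝ) = -(x.2 : ℝ)} = 1) :
    Noncontextual μ ↔ 2 ≤ ∑ i, |E1 μ i - E2 μ (i - 1)| := by
  classical
  have hanti' : ∀ i, μ i S15.Anti = 1 := hanti
  have hE2 : ∀ i : Fin 3, E2 μ i = -(E1 μ i) := fun i => S15.E2_eq_neg (hanti' i)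
  have hE1 : ∀ i : Fin 3, E1 μ i = 2 * ((μ i) {S15.X0}).toReal - 1 :=
    fun i => S15.E1_eq (hanti' i)
  have hb : ∀ i : Fin 3, -1 ≤ E1 μ i ∧ E1 μ i ≤ 1 := by
    intro i
    have h1 : ((μ i) {S15.X0}).toReal ≤ 1 := by
      have h := S15.k_le_one (ν := μ i)
      calc ((μ i) {S15.X0}).toReal ≤ (1 : ENNReal).toReal := ENNReal.toReal_mono (by simp) h
        _ = 1 := by simp
    have h0 : 0 ≤ ((μ i) {S15.X0}).toReal := ENNReal.toReal_nonneg
    constructor <;> rw [hE1 i] <;> linarith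
  have hkey : ∀ i : Fin 3, E1 μ i - E2 μ (i - 1) = E1 μ i + E1 μ (i - 1) := by
    intro i; rw [hE2 (i - 1)]; ring
  have e01 : (0 : Fin 3) - 1 = 2 := by decide
  have e11 : (1 : Fin 3) - 1 = 0 := by decide
  have e21 : (2 : Fin 3) - 1 = 1 := by decide
  have hsum3 : (∑ i : Fin 3, |E1 μ i - E2 μ (i - 1)|) =
      |E1 μ 0 + E1 μ 2| + |E1 μ 1 + E1 μ 0| + |E1 μ 2 + E1 μ 1| := by
    rw [Fin.sum_univ_three, hkey 0, hkey 1, hkey 2, e01, e11, e21]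
  rw [hsum3]
  constructor
  · intro h
    obtain ⟨S, hSC, hSd⟩ := h
    obtain ⟨hSP, hSm⟩ := hSC
    have hDs : ∀ i : Fin 3, S {f | (f i).1 = (f (i - 1)).2} =
        ENNReal.ofReal (1 - |E1 μ i + E1 μ (i - 1)| / 2) := by
      intro i; rw [← hkey i]; exact hSd i
    have hA : ∀ j : Fin 3, S (((fun f => f j) ⁻¹' S15.Anti)ᶜ) = 0 := by
      intro j
      have h1 : S ((fun f => f j) ⁻¹' S15.Anti) = 1 := by
        rw [← Measure.map_apply (S15.meas_fun _) (S15.meas_all _), hSm j]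
        exact hanti' j
      rw [measure_compl (S15.meas_all _) (by simp), h1, measure_univ, tsub_self]
    set D : Fin 3 → Set (Fin 3 → PM × PM) := fun i => {f | (f i).1 = (f (i - 1)).2} with hD
    have hDDD : S (D 0 ∩ D 1 ∩ D 2) = 0 := by
      refine measure_mono_null ?_ (measure_iUnion_null hA)
      intro f hf
      by_contra hnot
      simp only [Set.mem_iUnion, Set.mem_compl_iff, not_exists, not_not] at hnot
      obtain ⟨⟨h0, h1⟩, h2⟩ := hf
      have a0 : ((f 0).1 : ℝ) = -((f 0).2 : ℝ) := hnot 0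
      have a1 : ((f 1).1 : ℝ) = -((f 1).2 : ℝ) := hnot 1
      have a2 : ((f 2).1 : ℝ) = -((f 2).2 : ℝ) := hnot 2
      rw [hD] at h0 h1 h2
      simp only [Set.mem_setOf_eq] at h0 h1 h2
      rw [e01] at h0; rw [e11] at h1; rw [e21] at h2
      have v0 : ((f 0).1 : ℝ) = ((f 2).2 : ℝ) := congrArg Subtype.val h0
      have v1 : ((f 1).1 : ℝ) = ((f 0).2 : ℝ) := congrArg Subtype.val h1
      have v2 : ((f 2).1 : ℝ) = ((f 1).2 : ℝ) := congrArg Subtype.val h2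
      have hz : ((f 0).1 : ℝ) = 0 := by linarith
      rcases S15.pm_cases (f 0).1 with he | he <;>
        rw [he] at hz <;> simp [S15.p1, S15.m1] at hz <;> norm_num at hz
    have hcompl : ∀ i : Fin 3, S ((D i)ᶜ) = ENNReal.ofReal (|E1 μ i + E1 μ (i - 1)| / 2) := by
      intro i
      have hble : |E1 μ i + E1 μ (i - 1)| ≤ 2 := by
        have := hb i; have := hb (i - 1)
        rw [abs_le]; constructor <;> linarith
      rw [measure_compl (S15.meas_all _) (by simp), measure_univ, hDs i]
      have : (1 : ENNReal) = ENNReal.ofReal 1 := by simp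
      rw [this, ← ENNReal.ofReal_sub _ (by linarith [abs_nonneg (E1 μ i + E1 μ (i - 1))])]
      norm_num
    have hcover : (Set.univ : Set (Fin 3 → PM × PM)) ⊆
        (D 0)ᶜ ∪ ((D 1)ᶜ ∪ ((D 2)ᶜ ∪ (D 0 ∩ D 1 ∩ D 2))) := by
      intro f _
      by_cases hf0 : f ∈ D 0 <;> by_cases hf1 : f ∈ D 1 <;> by_cases hf2 : f ∈ D 2 <;>
        simp [hf0, hf1, hf2]
    have hle : (1 : ENNReal) ≤ S ((D 0)ᶜ) + (S ((D 1)ᶜ) + (S ((D 2)ᶜ) + S (D 0 ∩ D 1 ∩ D 2))) := by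
      calc (1 : ENNReal) = S Set.univ := (measure_univ).symm
        _ ≤ S ((D 0)ᶜ ∪ ((D 1)ᶜ ∪ ((D 2)ᶜ ∪ (D 0 ∩ D 1 ∩ D 2)))) := measure_mono hcover
        _ ≤ _ := by
            refine le_trans (measure_union_le _ _) ?_
            gcongr
            refine le_trans (measure_union_le _ _) ?_
            gcongr
            exact measure_union_le _ _
    rw [hDDD, add_zero, hcompl 0, hcompl 1, hcompl 2, e01, e11, e21] at hle
    rw [← ENNReal.ofReal_add (by positivity) (by positivity),
      ← ENNReal.ofReal_add (by positivity) (by positivity)] at hle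
    have := ENNReal.one_le_ofReal.mp hle
    linarith
  · intro hs
    obtain ⟨t, w1, w2, w3, w4, w5, w6, w7, w8⟩ :=
      S15.exists_t (E1 μ 0) (E1 μ 1) (E1 μ 2)
        (|E1 μ 0 + E1 μ 2| - 1) (|E1 μ 1 + E1 μ 0| - 1) (|E1 μ 2 + E1 μ 1| - 1)
        rfl rfl rfl (hb 0).1 (hb 0).2 (hb 1).1 (hb 1).2 (hb 2).1 (hb 2).2 hs
    set W : Bool × Bool × Bool → ℝ := fun s =>
      (1 + E1 μ 0 * S15.sg s.1 + E1 μ 1 * S15.sg s.2.1 + E1 μ 2 * S15.sg s.2.2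
        + (|E1 μ 0 + E1 μ 2| - 1) * (S15.sg s.1 * S15.sg s.2.2)
        + (|E1 μ 1 + E1 μ 0| - 1) * (S15.sg s.2.1 * S15.sg s.1)
        + (|E1 μ 2 + E1 μ 1| - 1) * (S15.sg s.2.2 * S15.sg s.2.1)
        + t * (S15.sg s.1 * S15.sg s.2.1 * S15.sg s.2.2)) / 8 with hWdef
    have hW : ∀ s, 0 ≤ W s := by
      rintro ⟨b0, b1, b2⟩
      cases b0 <;> cases b1 <;> cases b2 <;>
        · simp only [hWdef, S15.sg, if_true, if_false, Bool.false_eq_true]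
          norm_num
          linarith [w1, w2, w3, w4, w5, w6, w7, w8]
    set S : Measure (Fin 3 → PM × PM) :=
      ∑ s : Bool × Bool × Bool, ENNReal.ofReal (W s) • Measure.dirac (S15.gfun s) with hSdef
    have hSapp : ∀ E : Set (Fin 3 → PM × PM), S E =
        ENNReal.ofReal (∑ s : Bool × Bool × Bool, if S15.gfun s ∈ E then W s else 0) :=
      fun E => S15.sum_apply' W S15.gfun hW E
    have hm0 : ∀ i : Fin 3, μ i {S15.X0} = ENNReal.ofReal (((μ i) {S15.X0}).toReal) :=
      fun i => (ENNReal.ofReal_toReal (measure_ne_top _ _)).symm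
    have hm1 : ∀ i : Fin 3, μ i {S15.X1} = ENNReal.ofReal (1 - ((μ i) {S15.X0}).toReal) := by
      intro i
      rw [S15.k1_eq (hanti' i), ENNReal.ofReal_sub _ ENNReal.toReal_nonneg, ← hm0 i]
      simp
    have hE1' : ∀ i : Fin 3, E1 μ i = 2 * ((μ i) {((S15.p1, S15.m1) : ↑PM × ↑PM)}).toReal - 1 := hE1
    refine ⟨S, ⟨?_, ?_⟩, ?_⟩
    · constructor
      rw [hSapp, ← ENNReal.ofReal_one]
      refine congrArg ENNReal.ofReal ?_
      simp [Set.mem_preimage, Set.mem_singleton_iff, Set.mem_setOf_eq, S15.gfun, S15.pmOf,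
            S15.X0, S15.X1, Matrix.cons_val_zero, Matrix.cons_val_one, Matrix.head_cons,
            Matrix.cons_val_two, Matrix.tail_cons, Bool.not_true, Bool.not_false,
            Fintype.sum_prod_type, Fintype.sum_bool, S15.p1_ne_m1, S15.m1_ne_p1,
            Prod.mk.injEq, hWdef, S15.sg]
      ring
    · intro i
      rw [MeasureTheory.Measure.ext_iff_singleton]
      rintro ⟨x1, x2⟩
      rw [Measure.map_apply (S15.meas_fun _) (S15.meas_all _), hSapp]
      rcases S15.pm_cases x1 with h1 | h1 <;> subst h1 <;>
        rcases S15.pm_cases x2 with h2 | h2 <;> subst h2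
      · rw [show ((S15.p1, S15.p1) : ↑PM × ↑PM) = (S15.p1, S15.p1) from rfl,
          S15.null_pp (hanti' i)]
        rw [← ENNReal.ofReal_zero]
        refine congrArg ENNReal.ofReal ?_
        fin_cases i <;>
          · simp [Set.mem_preimage, Set.mem_singleton_iff, Set.mem_setOf_eq, S15.gfun, S15.pmOf,
            S15.X0, S15.X1, Matrix.cons_val_zero, Matrix.cons_val_one, Matrix.head_cons,
            Matrix.cons_val_two, Matrix.tail_cons, Bool.not_true, Bool.not_false,
            Fintype.sum_prod_type, Fintype.sum_bool, S15.p1_ne_m1, S15.m1_ne_p1,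
            Prod.mk.injEq, hWdef, S15.sg]
      · rw [show ((S15.p1, S15.m1) : ↑PM × ↑PM) = S15.X0 from rfl, hm0 i]
        refine congrArg ENNReal.ofReal ?_
        fin_cases i <;>
          · simp [Set.mem_preimage, Set.mem_singleton_iff, Set.mem_setOf_eq, S15.gfun, S15.pmOf,
            S15.X0, S15.X1, Matrix.cons_val_zero, Matrix.cons_val_one, Matrix.head_cons,
            Matrix.cons_val_two, Matrix.tail_cons, Bool.not_true, Bool.not_false,
            Fintype.sum_prod_type, Fintype.sum_bool, S15.p1_ne_m1, S15.m1_ne_p1,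
            Prod.mk.injEq, hWdef, S15.sg]
            linarith [hE1' 0, hE1' 1, hE1' 2]
      · rw [show ((S15.m1, S15.p1) : ↑PM × ↑PM) = S15.X1 from rfl, hm1 i]
        refine congrArg ENNReal.ofReal ?_
        fin_cases i <;>
          · simp [Set.mem_preimage, Set.mem_singleton_iff, Set.mem_setOf_eq, S15.gfun, S15.pmOf,
            S15.X0, S15.X1, Matrix.cons_val_zero, Matrix.cons_val_one, Matrix.head_cons,
            Matrix.cons_val_two, Matrix.tail_cons, Bool.not_true, Bool.not_false,
            Fintype.sum_prod_type, Fintype.sum_bool, S15.p1_ne_m1, S15.m1_ne_p1,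
            Prod.mk.injEq, hWdef, S15.sg]
            linarith [hE1' 0, hE1' 1, hE1' 2]
      · rw [show ((S15.m1, S15.m1) : ↑PM × ↑PM) = (S15.m1, S15.m1) from rfl,
          S15.null_mm (hanti' i)]
        rw [← ENNReal.ofReal_zero]
        refine congrArg ENNReal.ofReal ?_
        fin_cases i <;>
          · simp [Set.mem_preimage, Set.mem_singleton_iff, Set.mem_setOf_eq, S15.gfun, S15.pmOf,
            S15.X0, S15.X1, Matrix.cons_val_zero, Matrix.cons_val_one, Matrix.head_cons,
            Matrix.cons_val_two, Matrix.tail_cons, Bool.not_true, Bool.not_false,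
            Fintype.sum_prod_type, Fintype.sum_bool, S15.p1_ne_m1, S15.m1_ne_p1,
            Prod.mk.injEq, hWdef, S15.sg]
    · intro i
      fin_cases i
      · show S {f | (f 0).1 = (f ((0 : Fin 3) - 1)).2} =
          ENNReal.ofReal (1 - |E1 μ 0 - E2 μ ((0 : Fin 3) - 1)| / 2)
        rw [show ((0 : Fin 3) - 1) = 2 from e01] at *
        rw [hE2 2, hSapp, show E1 μ 0 - -E1 μ 2 = E1 μ 0 + E1 μ 2 by ring]
        refine congrArg ENNReal.ofReal ?_
        simp [Set.mem_preimage, Set.mem_singleton_iff, Set.mem_setOf_eq, S15.gfun, S15.pmOf,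
            S15.X0, S15.X1, Matrix.cons_val_zero, Matrix.cons_val_one, Matrix.head_cons,
            Matrix.cons_val_two, Matrix.tail_cons, Bool.not_true, Bool.not_false,
            Fintype.sum_prod_type, Fintype.sum_bool, S15.p1_ne_m1, S15.m1_ne_p1,
            Prod.mk.injEq, hWdef, S15.sg]
        ring
      · show S {f | (f 1).1 = (f ((1 : Fin 3) - 1)).2} =
          ENNReal.ofReal (1 - |E1 μ 1 - E2 μ ((1 : Fin 3) - 1)| / 2)
        rw [show ((1 : Fin 3) - 1) = 0 from e11] at *
        rw [hE2 0, hSapp, show E1 μ 1 - -E1 μ 0 = E1 μ 1 + E1 μ 0 by ring]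
        refine congrArg ENNReal.ofReal ?_
        simp [Set.mem_preimage, Set.mem_singleton_iff, Set.mem_setOf_eq, S15.gfun, S15.pmOf,
            S15.X0, S15.X1, Matrix.cons_val_zero, Matrix.cons_val_one, Matrix.head_cons,
            Matrix.cons_val_two, Matrix.tail_cons, Bool.not_true, Bool.not_false,
            Fintype.sum_prod_type, Fintype.sum_bool, S15.p1_ne_m1, S15.m1_ne_p1,
            Prod.mk.injEq, hWdef, S15.sg]
        ring
      · show S {f | (f 2).1 = (f ((2 : Fin 3) - 1)).2} =
          ENNReal.ofReal (1 - |E1 μ 2 - E2 μ ((2 : Fin 3) - 1)| / 2)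
        rw [show ((2 : Fin 3) - 1) = 1 from e21] at *
        rw [hE2 1, hSapp, show E1 μ 2 - -E1 μ 1 = E1 μ 2 + E1 μ 1 by ring]
        refine congrArg ENNReal.ofReal ?_
        simp [Set.mem_preimage, Set.mem_singleton_iff, Set.mem_setOf_eq, S15.gfun, S15.pmOf,
            S15.X0, S15.X1, Matrix.cons_val_zero, Matrix.cons_val_one, Matrix.head_cons,
            Matrix.cons_val_two, Matrix.tail_cons, Bool.not_true, Bool.not_false,
            Fintype.sum_prod_type, Fintype.sum_bool, S15.p1_ne_m1, S15.m1_ne_p1,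
            Prod.mk.injEq, hWdef, S15.sg]
        ring
end

section
/- Let (μ_1, μ_2, μ_3) be a cyclic system of rank 3 with binary ±1 measurements such that each μ_i is supported on the anti-diagonal {(1,−1), (−1,1)}, and suppose the system is consistently connected, i.e., ⟨R_i^i⟩ = ⟨R_i^{i⊖1}⟩ for every i ∈ {1, 2, 3}. Then the system is contextual: there is no coupling S such that for every i, S {f | (f i).1 = (f (i⊖1)).2} = 1. -/
open MeasureTheory

/-- A consistently connected cyclic system of rank 3 whose every context is supported on the
anti-diagonal `{(1,-1), (-1,1)}` (Specker's magic boxes) is contextual: no coupling makes the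
two measurements of each property equal with probability 1. -/
theorem stmt16 (μ : Fin 3 → Measure (PM × PM)) [∀ i, IsProbabilityMeasure (μ i)]
    (hanti : ∀ i, μ i {x | (x.1 : ℝ) = -(x.2 : ℝ)} = 1)
    (hcc : ∀ i, E1 μ i = E2 μ (i - 1)) :
    ¬ ∃ S : Measure (Fin 3 → PM × PM), IsSysCoupling μ S ∧
        ∀ i : Fin 3, S {f | (f i).1 = (f (i - 1)).2} = 1 := by

  rintro ⟨S, ⟨hP, hmarg⟩, hmax⟩
  have hmeasA : MeasurableSet {x : PM × PM | (x.1 : ℝ) = -(x.2 : ℝ)} := by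
    apply measurableSet_eq_fun
    · exact measurable_subtype_coe.comp measurable_fst
    · exact (measurable_subtype_coe.comp measurable_snd).neg
  have hAe : ∀ i : Fin 3, ∀ᵐ f ∂S, ((f i).1 : ℝ) = -((f i).2 : ℝ) := by
    intro i
    have h1 : S ((fun f : Fin 3 → PM × PM => f i) ⁻¹' {x | (x.1 : ℝ) = -(x.2 : ℝ)}) = 1 := by
      rw [← Measure.map_apply (measurable_pi_apply i) hmeasA, hmarg i]
      exact hanti i
    have hm : MeasurableSet ((fun f : Fin 3 → PM × PM => f i) ⁻¹' {x | (x.1 : ℝ) = -(x.2 : ℝ)}) :=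
      (measurable_pi_apply i) hmeasA
    have := (prob_compl_eq_zero_iff hm).mpr h1
    exact this
  have hBe : ∀ i : Fin 3, ∀ᵐ f ∂S, ((f i).1 : ℝ) = ((f (i - 1)).2 : ℝ) := by
    intro i
    have hset : {f : Fin 3 → PM × PM | (f i).1 = (f (i - 1)).2}
        = {f | ((f i).1 : ℝ) = ((f (i - 1)).2 : ℝ)} := by
      ext f; exact Subtype.ext_iff
    have hmB : MeasurableSet {f : Fin 3 → PM × PM | (f i).1 = (f (i - 1)).2} := by
      rw [hset]
      apply measurableSet_eq_fun
      · exact measurable_subtype_coe.comp (measurable_fst.comp (measurable_pi_apply i))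
      · exact measurable_subtype_coe.comp (measurable_snd.comp (measurable_pi_apply (i - 1)))
    have := (prob_compl_eq_zero_iff hmB).mpr (hmax i)
    filter_upwards [this] with f hf
    exact congrArg Subtype.val hf
  have : ∀ᵐ f ∂S, False := by
    filter_upwards [hAe 0, hAe 1, hAe 2, hBe 0, hBe 1, hBe 2] with f a0 a1 a2 b0 b1 b2
    have h2 : (0:Fin 3) - 1 = 2 := by decide
    have h1 : (2:Fin 3) - 1 = 1 := by decide
    have h0 : (1:Fin 3) - 1 = 0 := by decide
    rw [h2] at b0; rw [h1] at b2; rw [h0] at b1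
    have hv := (f 0).1.2
    simp only [PM, Set.mem_insert_iff, Set.mem_singleton_iff] at hv
    rcases hv with hv | hv <;> nlinarith [b0, b1, b2, a0, a1, a2]
  have hne : S ≠ 0 := IsProbabilityMeasure.ne_zero S
  exact (this.exists).elim fun _ h => h
end

section
/- Let M be a finite set of measurements equipped with functions ctx : M → C and prop : M → Q into finite sets of contexts and properties, and for each context c let μ_c be a probability measure on ({m : M // ctx m = c} → Bool) (the distribution of the bunch of measurements in context c). Suppose the resulting system is noncontextual: there exists a probability measure S on (M → Bool) whose restriction to each context c has distribution μ_c, and such that for every property q and every nonempty subset J of {m : M // prop m = q}, the probability S {x | x is constant on J} is maximal among all such couplings. Then for any m₀ ∈ M, the subsystem on M \ {m₀} (with bunch distributions obtained as the corresponding marginals of the μ_c) is also noncontextual. -/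
open MeasureTheory

/-- A coupling of a system of binary measurements (given by `ctx : M → C` and bunch
distributions `μ c` on `{m // ctx m = c} → Bool`): a probability measure on `M → Bool` whose
restriction to each context `c` has distribution `μ c`. -/
def SysCoupling {M C : Type*} (ctx : M → C)
    (μ : ∀ c : C, Measure ({m : M // ctx m = c} → Bool))
    (S : Measure (M → Bool)) : Prop :=
  IsProbabilityMeasure S ∧
    ∀ c : C, S.map (fun x (m : {m : M // ctx m = c}) => x m.val) = μ c

/-- A system of binary measurements is noncontextual if it has a coupling `S` such that for
every property `q` and every nonempty subset `J` of the connection of `q` (the measurements of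
`q`), the probability that `S` is constant on `J` is maximal among all couplings. -/
def NoncontextualSys {M C Q : Type*} (ctx : M → C) (prop : M → Q)
    (μ : ∀ c : C, Measure ({m : M // ctx m = c} → Bool)) : Prop :=
  ∃ S : Measure (M → Bool), SysCoupling ctx μ S ∧
    ∀ q : Q, ∀ J : Set M, (∀ m ∈ J, prop m = q) → J.Nonempty →
      ∀ S' : Measure (M → Bool), SysCoupling ctx μ S' →
        S' {x | ∀ m ∈ J, ∀ m' ∈ J, x m = x m'} ≤ S {x | ∀ m ∈ J, ∀ m' ∈ J, x m = x m'} 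

open scoped Classical

set_option maxHeartbeats 1000000

namespace Stmt17Aux

variable {M C : Type}

/-- Restriction of a global assignment to `M \ {m₀}`. -/
def resDel (m₀ : M) (z : M → Bool) : {m : M // m ≠ m₀} → Bool := fun m => z m.val

/-- Extension of an assignment on `M \ {m₀}` by a value `b` at `m₀`. -/
noncomputable def extDel (m₀ : M) (x : {m : M // m ≠ m₀} → Bool) (b : Bool) : M → Bool :=
  fun m => if h : m = m₀ then b else x ⟨m, h⟩

lemma resDel_extDel (m₀ : M) (x : {m : M // m ≠ m₀} → Bool) (b : Bool) :
    resDel m₀ (extDel m₀ x b) = x := by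
  funext m
  simp [resDel, extDel, m.prop]

lemma extDel_apply_self (m₀ : M) (x : {m : M // m ≠ m₀} → Bool) (b : Bool) :
    extDel m₀ x b m₀ = b := by simp [extDel]

lemma extDel_apply_ne (m₀ : M) (x : {m : M // m ≠ m₀} → Bool) (b : Bool) (m : M)
    (h : m ≠ m₀) : extDel m₀ x b m = x ⟨m, h⟩ := by simp [extDel, h]

lemma extDel_resDel (m₀ : M) (z : M → Bool) : extDel m₀ (resDel m₀ z) (z m₀) = z := by
  funext m
  by_cases h : m = m₀ <;> simp [extDel, resDel, h]

/-- Assignments on `M` correspond to pairs (assignment on `M \ {m₀}`, value at `m₀`). -/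
noncomputable def delEquiv (m₀ : M) : (({m : M // m ≠ m₀} → Bool) × Bool) ≃ (M → Bool) where
  toFun p := extDel m₀ p.1 p.2
  invFun z := (resDel m₀ z, z m₀)
  left_inv p := by
    ext1
    · exact resDel_extDel m₀ p.1 p.2
    · exact extDel_apply_self m₀ p.1 p.2
  right_inv z := extDel_resDel m₀ z

lemma measure_finset_sum {α : Type*} [MeasurableSpace α] [MeasurableSingletonClass α]
    (μ : Measure α) (s : Finset α) : μ ↑s = ∑ a ∈ s, μ {a} := by
  have h1 : (↑s : Set α) = ⋃ a ∈ s, ({a} : Set α) := by ext a; simp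
  rw [h1, measure_biUnion_finset ?_ fun a _ => measurableSet_singleton a]
  intro a _ b _ hab
  exact Set.disjoint_singleton.mpr hab

lemma meas_sum_ite {α : Type*} [Fintype α] [MeasurableSpace α] [MeasurableSingletonClass α]
    (μ : Measure α) (s : Set α) : μ s = ∑ a : α, if a ∈ s then μ {a} else 0 := by
  have h2 : ((Finset.univ.filter (· ∈ s) : Finset α) : Set α) = s := by
    ext a; simp
  calc μ s = μ ↑(Finset.univ.filter (· ∈ s)) := by rw [h2]
    _ = ∑ a ∈ Finset.univ.filter (· ∈ s), μ {a} := measure_finset_sum μ _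
    _ = ∑ a : α, if a ∈ s then μ {a} else 0 := Finset.sum_filter _ _

lemma meas_sum_ite' {α : Type*} [Fintype α] [MeasurableSpace α] [MeasurableSingletonClass α]
    (μ : Measure α) (p : α → Prop) [DecidablePred p] :
    μ {a | p a} = ∑ a : α, if p a then μ {a} else 0 := by
  have h2 : ((Finset.univ.filter p : Finset α) : Set α) = {a | p a} := by
    ext a; simp
  calc μ {a | p a} = μ ↑(Finset.univ.filter p) := by rw [h2]
    _ = ∑ a ∈ Finset.univ.filter p, μ {a} := measure_finset_sum μ _
    _ = ∑ a : α, if p a then μ {a} else 0 := Finset.sum_filter _ _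

end Stmt17Aux

open Stmt17Aux

private lemma extend_coupling {M C : Type} [Fintype M] (ctx : M → C)
    (μ : ∀ c : C, Measure ({m : M // ctx m = c} → Bool))
    (hμ : ∀ c, IsProbabilityMeasure (μ c)) (m₀ : M)
    (T' : Measure ({m : M // m ≠ m₀} → Bool))
    (hT' : SysCoupling (fun m : {m : M // m ≠ m₀} => ctx m.val)
      (fun c => (μ c).map
        (fun (y : {m : M // ctx m = c} → Bool)
             (m : {m : {m : M // m ≠ m₀} // ctx m.val = c}) => y ⟨m.val.val, m.prop⟩)) T') :
    ∃ T : Measure (M → Bool), SysCoupling ctx μ T ∧ T.map (resDel m₀) = T' := by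
  haveI := hμ (ctx m₀)
  haveI := hT'.1
  -- notation
  let m₀K : {m : M // ctx m = ctx m₀} := ⟨m₀, rfl⟩
  let A : ({m : M // m ≠ m₀} → Bool) → Set ({m : M // ctx m = ctx m₀} → Bool) :=
    fun x => {y | ∀ m : {m : M // ctx m = ctx m₀}, ∀ h : m.1 ≠ m₀, y m = x ⟨m.1, h⟩}
  let Dv : ({m : M // m ≠ m₀} → Bool) → ENNReal := fun x => μ (ctx m₀) (A x)
  let Nv : ({m : M // m ≠ m₀} → Bool) → Bool → ENNReal := fun x b => μ (ctx m₀) (A x ∩ {y | y m₀K = b})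
  let kv : ({m : M // m ≠ m₀} → Bool) → Bool → ENNReal := fun x b =>
    if Dv x = 0 then (if b then 1 else 0) else Nv x b / Dv x
  let w : ({m : M // m ≠ m₀} → Bool) → Bool → ENNReal := fun x b => T' {x} * kv x b
  let T : Measure (M → Bool) :=
    ∑ z : M → Bool, (w (resDel m₀ z) (z m₀)) • Measure.dirac z
  -- kv sums to 1 over the two values
  have hkv : ∀ x : ({m : M // m ≠ m₀} → Bool), kv x true + kv x false = 1 := by
    intro x
    have hND : Nv x true + Nv x false = Dv x := by
      rw [← measure_union ?_ ((Set.toFinite _).measurableSet)]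
      · congr 1
        ext y
        constructor
        · rintro (⟨h, _⟩ | ⟨h, _⟩) <;> exact h
        · intro h
          cases hb : y m₀K
          · right; exact ⟨h, hb⟩
          · left; exact ⟨h, hb⟩
      · rw [Set.disjoint_left]
        rintro y ⟨_, h1⟩ ⟨_, h2⟩
        simp only [Set.mem_setOf_eq] at h1 h2
        rw [h1] at h2; exact Bool.noConfusion h2
    by_cases h0 : Dv x = 0
    · simp [kv, h0]
    · simp only [kv, if_neg h0]
      rw [ENNReal.div_add_div_same, hND, ENNReal.div_self h0 (measure_ne_top _ _)]
  -- value of T on sets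
  have hTset : ∀ s : Set (M → Bool),
      T s = ∑ z : M → Bool, if z ∈ s then w (resDel m₀ z) (z m₀) else 0 := by
    intro s
    rw [show T s = ∑ z : M → Bool, (w (resDel m₀ z) (z m₀)) • (Measure.dirac z s) from
      Measure.finset_sum_apply _ _ _ |>.trans (by simp [Measure.smul_apply])]
    refine Finset.sum_congr rfl fun z _ => ?_
    rw [Measure.dirac_apply]
    by_cases hz : z ∈ s <;> simp [hz]
  have hTsingle : ∀ z : M → Bool, T {z} = w (resDel m₀ z) (z m₀) := by
    intro z
    rw [hTset]
    simpa using Finset.sum_ite_eq' Finset.univ z (fun z' => w (resDel m₀ z') (z' m₀))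
  -- reindexing sums over M → Bool via delEquiv
  have hreidx : ∀ F : (M → Bool) → ENNReal,
      ∑ z : M → Bool, F z = ∑ x : ({m : M // m ≠ m₀} → Bool), (F (extDel m₀ x true) + F (extDel m₀ x false)) := by
    intro F
    rw [← Equiv.sum_comp (delEquiv m₀) F, Fintype.sum_prod_type]
    refine Finset.sum_congr rfl fun x _ => ?_
    simp [delEquiv]
  -- total mass of T'
  have hT'univ : ∑ x : ({m : M // m ≠ m₀} → Bool), T' {x} = 1 := by
    have := meas_sum_ite T' Set.univ
    simp only [Set.mem_univ, if_true] at this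
    rw [← this, measure_univ]
  -- T is a probability measure
  have hTprob : IsProbabilityMeasure T := by
    constructor
    rw [hTset, hreidx]
    simp only [Set.mem_univ, if_true]
    calc ∑ x : ({m : M // m ≠ m₀} → Bool), (w (resDel m₀ (extDel m₀ x true)) (extDel m₀ x true m₀)
          + w (resDel m₀ (extDel m₀ x false)) (extDel m₀ x false m₀))
        = ∑ x : ({m : M // m ≠ m₀} → Bool), T' {x} := by
          refine Finset.sum_congr rfl fun x _ => ?_
          rw [resDel_extDel, resDel_extDel, extDel_apply_self, extDel_apply_self]
          show T' {x} * kv x true + T' {x} * kv x false = T' {x}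
          rw [← mul_add, hkv, mul_one]
      _ = 1 := hT'univ
  -- the marginal of T on M \ {m₀} is T'
  have hTmarg : T.map (resDel m₀) = T' := by
    apply Measure.ext_of_singleton
    intro x
    rw [Measure.map_apply (measurable_of_countable _) (measurableSet_singleton x)]
    have hpre : resDel m₀ ⁻¹' {x} = {extDel m₀ x true, extDel m₀ x false} := by
      ext z
      simp only [Set.mem_preimage, Set.mem_singleton_iff, Set.mem_insert_iff]
      constructor
      · intro hz
        have hz' : z = extDel m₀ x (z m₀) := by rw [← hz, extDel_resDel]
        cases hb : z m₀
        · right; rw [hz', hb]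
        · left; rw [hz', hb]
      · rintro (rfl | rfl) <;> rw [resDel_extDel]
    rw [hpre]
    have hne : extDel m₀ x true ≠ extDel m₀ x false := by
      intro he
      have := congrFun he m₀
      rw [extDel_apply_self, extDel_apply_self] at this
      exact Bool.noConfusion this
    rw [show ({extDel m₀ x true, extDel m₀ x false} : Set (M → Bool))
        = {extDel m₀ x true} ∪ {extDel m₀ x false} by rfl,
      measure_union (by simpa using hne) (measurableSet_singleton _),
      hTsingle, hTsingle, resDel_extDel, resDel_extDel, extDel_apply_self, extDel_apply_self]
    show T' {x} * kv x true + T' {x} * kv x false = T' {x}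
    rw [← mul_add, hkv, mul_one]
  refine ⟨T, ⟨hTprob, ?_⟩, hTmarg⟩
  intro c
  by_cases hc : c = ctx m₀
  · -- the context of m₀
    subst hc
    apply Measure.ext_of_singleton
    intro y
    rw [Measure.map_apply (measurable_of_countable _) (measurableSet_singleton y)]
    set P : Set (M → Bool) :=
      (fun z (m : {m : M // ctx m = ctx m₀}) => z m.val) ⁻¹' {y} with hP
    -- membership of extensions in P
    have hCx : ∀ (x : ({m : M // m ≠ m₀} → Bool)) (b : Bool), (extDel m₀ x b ∈ P) ↔
        ((∀ m : {m : M // ctx m = ctx m₀}, ∀ h : m.1 ≠ m₀, x ⟨m.1, h⟩ = y m)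
          ∧ b = y m₀K) := by
      intro x b
      simp only [hP, Set.mem_preimage, Set.mem_singleton_iff, funext_iff]
      constructor
      · intro hp
        refine ⟨fun m h => ?_, ?_⟩
        · have := hp m
          rwa [extDel_apply_ne m₀ x b m.1 h] at this
        · have := hp m₀K
          rwa [extDel_apply_self] at this
      · rintro ⟨hcx, hb⟩ m
        by_cases h : m.1 = m₀
        · have hm : m = m₀K := Subtype.ext h
          rw [hm]
          rw [show extDel m₀ x b (m₀K).val = b from extDel_apply_self m₀ x b]
          exact hb
        · rw [extDel_apply_ne m₀ x b m.1 h]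
          exact hcx m h
    set Ay : Set ({m : M // ctx m = ctx m₀} → Bool) :=
      {y' | ∀ m : {m : M // ctx m = ctx m₀}, m.1 ≠ m₀ → y' m = y m} with hAy
    -- for compatible x, the conditional data only depends on y
    have hDvA : ∀ x : ({m : M // m ≠ m₀} → Bool),
        (∀ m : {m : M // ctx m = ctx m₀}, ∀ h : m.1 ≠ m₀, x ⟨m.1, h⟩ = y m) →
        A x = Ay := by
      intro x hx
      ext y'
      constructor
      · intro hy' m hm
        rw [hy' m hm, hx m hm]
      · intro hy' m hm
        rw [hy' m hm, hx m hm]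
    have hNvA : ∀ x : ({m : M // m ≠ m₀} → Bool),
        (∀ m : {m : M // ctx m = ctx m₀}, ∀ h : m.1 ≠ m₀, x ⟨m.1, h⟩ = y m) →
        A x ∩ {y' | y' m₀K = y m₀K} = {y} := by
      intro x hx
      rw [hDvA x hx]
      ext y'
      constructor
      · rintro ⟨h1, h2⟩
        have : y' = y := by
          funext m
          by_cases hm : m.1 = m₀
          · have : m = m₀K := Subtype.ext hm
            rw [this]; exact h2
          · exact h1 m hm
        exact this
      · rintro rfl
        exact ⟨fun m _ => rfl, rfl⟩
    set κ : ENNReal := if μ (ctx m₀) Ay = 0 then (if y m₀K then 1 else 0)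
      else μ (ctx m₀) {y} / μ (ctx m₀) Ay with hκ
    have hkvκ : ∀ x : ({m : M // m ≠ m₀} → Bool),
        (∀ m : {m : M // ctx m = ctx m₀}, ∀ h : m.1 ≠ m₀, x ⟨m.1, h⟩ = y m) →
        kv x (y m₀K) = κ := by
      intro x hx
      show (if Dv x = 0 then (if y m₀K then 1 else 0) else Nv x (y m₀K) / Dv x) = κ
      have h1 : Dv x = μ (ctx m₀) Ay := by
        show μ (ctx m₀) (A x) = _
        rw [hDvA x hx]
      have h2 : Nv x (y m₀K) = μ (ctx m₀) {y} := by
        show μ (ctx m₀) (A x ∩ {y' | y' m₀K = y m₀K}) = _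
        rw [hNvA x hx]
      rw [h1, h2, hκ]
    -- compute T P
    rw [hTset, hreidx]
    have hterm : ∀ x : ({m : M // m ≠ m₀} → Bool),
        ((if extDel m₀ x true ∈ P then
            w (resDel m₀ (extDel m₀ x true)) (extDel m₀ x true m₀) else 0)
          + (if extDel m₀ x false ∈ P then
            w (resDel m₀ (extDel m₀ x false)) (extDel m₀ x false m₀) else 0))
        = (if (∀ m : {m : M // ctx m = ctx m₀}, ∀ h : m.1 ≠ m₀, x ⟨m.1, h⟩ = y m)
            then T' {x} else 0) * κ := by
      intro x
      rw [resDel_extDel, resDel_extDel, extDel_apply_self, extDel_apply_self]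
      by_cases hcx : ∀ m : {m : M // ctx m = ctx m₀}, ∀ h : m.1 ≠ m₀, x ⟨m.1, h⟩ = y m
      · rw [if_pos hcx]
        have hkved : ∀ b, b = y m₀K → w x b = T' {x} * κ := by
          intro b hb
          have h3 := hkvκ x hcx
          rw [← hb] at h3
          show T' {x} * kv x b = T' {x} * κ
          rw [h3]
        cases hy0 : y m₀K
        · rw [if_neg (by rw [hCx]; rintro ⟨-, hb⟩; rw [hy0] at hb; exact Bool.noConfusion hb),
            if_pos (by rw [hCx]; exact ⟨hcx, hy0.symm⟩), zero_add]
          exact hkved false hy0.symm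
        · rw [if_pos (by rw [hCx]; exact ⟨hcx, hy0.symm⟩),
            if_neg (by rw [hCx]; rintro ⟨-, hb⟩; rw [hy0] at hb; exact Bool.noConfusion hb),
            add_zero]
          exact hkved true hy0.symm
      · rw [if_neg (by rw [hCx]; tauto), if_neg (by rw [hCx]; tauto),
          if_neg hcx, add_zero, zero_mul]
    rw [Finset.sum_congr rfl fun x _ => hterm x, ← Finset.sum_mul]
    -- identify the sum with μ (ctx m₀) Ay via the coupling hypothesis
    have hsum : (∑ x : ({m : M // m ≠ m₀} → Bool), if (∀ m : {m : M // ctx m = ctx m₀},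
          ∀ h : m.1 ≠ m₀, x ⟨m.1, h⟩ = y m) then T' {x} else 0)
        = μ (ctx m₀) Ay := by
      have hms := meas_sum_ite' T' (fun x : ({m : M // m ≠ m₀} → Bool) =>
        ∀ m : {m : M // ctx m = ctx m₀}, ∀ h : m.1 ≠ m₀, x ⟨m.1, h⟩ = y m)
      beta_reduce at hms
      rw [← hms]
      have hBset : {x : ({m : M // m ≠ m₀} → Bool) | ∀ m : {m : M // ctx m = ctx m₀},
          ∀ h : m.1 ≠ m₀, x ⟨m.1, h⟩ = y m}
          = (fun x (mm : {m : {m : M // m ≠ m₀} // ctx m.val = ctx m₀}) => x mm.val) ⁻¹'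
            {u | ∀ mm : {m : {m : M // m ≠ m₀} // ctx m.val = ctx m₀},
              u mm = y ⟨mm.val.val, mm.prop⟩} := by
        ext x
        simp only [Set.mem_setOf_eq, Set.mem_preimage]
        constructor
        · intro hx mm
          exact hx ⟨mm.val.val, mm.prop⟩ mm.val.prop
        · intro hx m hm
          exact hx ⟨⟨m.val, hm⟩, m.prop⟩
      rw [hBset, ← Measure.map_apply (measurable_of_countable _)
        ((Set.toFinite _).measurableSet), hT'.2 (ctx m₀),
        Measure.map_apply (measurable_of_countable _) ((Set.toFinite _).measurableSet)]
      congr 1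
      ext y'
      simp only [Set.mem_preimage, Set.mem_setOf_eq, hAy]
      constructor
      · intro hy' m hm
        exact hy' ⟨⟨m.val, hm⟩, m.prop⟩
      · intro hy' mm
        exact hy' ⟨mm.val.val, mm.prop⟩ mm.val.prop
    rw [hsum]
    -- conclude
    by_cases h0 : μ (ctx m₀) Ay = 0
    · rw [h0, zero_mul]
      symm
      refine le_antisymm (le_trans (measure_mono ?_) h0.le) zero_le
      rintro y' rfl
      exact fun m _ => rfl
    · rw [hκ, if_neg h0, mul_comm, ENNReal.div_mul_cancel h0 (measure_ne_top _ _)]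
  · -- contexts not containing m₀
    have hne : ∀ m : {m : M // ctx m = c}, m.1 ≠ m₀ := by
      intro m he
      exact hc (by rw [← m.prop, he])
    have hcomp1 : (fun z (m : {m : M // ctx m = c}) => z m.val)
        = (fun (x : ({m : M // m ≠ m₀} → Bool)) (m : {m : M // ctx m = c}) => x ⟨m.val, hne m⟩) ∘ resDel m₀ := rfl
    rw [hcomp1, ← Measure.map_map (measurable_of_countable _) (measurable_of_countable _),
      hTmarg]
    have hcomp2 : (fun (x : ({m : M // m ≠ m₀} → Bool)) (m : {m : M // ctx m = c}) => x ⟨m.val, hne m⟩)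
        = (fun (u : {m : {m : M // m ≠ m₀} // ctx m.val = c} → Bool)
            (m : {m : M // ctx m = c}) => u ⟨⟨m.val, hne m⟩, m.prop⟩)
          ∘ (fun x (mm : {m : {m : M // m ≠ m₀} // ctx m.val = c}) => x mm.val) := rfl
    rw [hcomp2, ← Measure.map_map (measurable_of_countable _) (measurable_of_countable _),
      hT'.2 c, Measure.map_map (measurable_of_countable _) (measurable_of_countable _)]
    have hid : (fun (u : {m : {m : M // m ≠ m₀} // ctx m.val = c} → Bool)
            (m : {m : M // ctx m = c}) => u ⟨⟨m.val, hne m⟩, m.prop⟩)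
          ∘ (fun (y : {m : M // ctx m = c} → Bool)
             (mm : {m : {m : M // m ≠ m₀} // ctx m.val = c}) => y ⟨mm.val.val, mm.prop⟩)
        = id := rfl
    rw [hid, Measure.map_id]

/-- Deleting a measurement from a noncontextual system of binary measurements leaves a
noncontextual system: the subsystem on `M \ {m₀}`, with bunch distributions the corresponding
marginals of the `μ c`, is noncontextual. -/
theorem stmt17 {M C Q : Type} [Fintype M] [Fintype C] [Fintype Q]
    (ctx : M → C) (prop : M → Q)
    (μ : ∀ c : C, Measure ({m : M // ctx m = c} → Bool))
    (h : NoncontextualSys ctx prop μ) (m₀ : M) :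
    NoncontextualSys (fun m : {m : M // m ≠ m₀} => ctx m.val)
      (fun m : {m : M // m ≠ m₀} => prop m.val)
      (fun c => (μ c).map
        (fun (y : {m : M // ctx m = c} → Bool)
             (m : {m : {m : M // m ≠ m₀} // ctx m.val = c}) => y ⟨m.val.val, m.prop⟩)) := by
  obtain ⟨S, hS, hmax⟩ := h
  haveI := hS.1
  have hμ : ∀ c, IsProbabilityMeasure (μ c) := by
    intro c
    rw [← hS.2 c]
    exact Measure.isProbabilityMeasure_map (measurable_of_countable _).aemeasurable
  -- event translation
  have hpre : ∀ J : Set {m : M // m ≠ m₀},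
      resDel m₀ ⁻¹' {x | ∀ m ∈ J, ∀ m' ∈ J, x m = x m'}
        = {z : M → Bool | ∀ m ∈ Subtype.val '' J, ∀ m' ∈ Subtype.val '' J, z m = z m'} := by
    intro J
    ext z
    simp only [Set.mem_preimage, Set.mem_setOf_eq]
    constructor
    · rintro hz a ⟨m, hm, rfl⟩ a' ⟨m', hm', rfl⟩
      exact hz m hm m' hm'
    · intro hz m hm m' hm'
      exact hz m.val ⟨m, hm, rfl⟩ m'.val ⟨m', hm', rfl⟩
  -- the coupling map for a context factors through the deletion
  have hSctx : SysCoupling (fun m : {m : M // m ≠ m₀} => ctx m.val)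
      (fun c => (μ c).map
        (fun (y : {m : M // ctx m = c} → Bool)
             (m : {m : {m : M // m ≠ m₀} // ctx m.val = c}) => y ⟨m.val.val, m.prop⟩))
      (S.map (resDel m₀)) := by
    constructor
    · exact Measure.isProbabilityMeasure_map (measurable_of_countable _).aemeasurable
    · intro c
      rw [Measure.map_map (measurable_of_countable _) (measurable_of_countable _)]
      have hcomp : (fun (x : {m : M // m ≠ m₀} → Bool)
            (mm : {m : {m : M // m ≠ m₀} // ctx m.val = c}) => x mm.val) ∘ resDel m₀
          = (fun (y : {m : M // ctx m = c} → Bool)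
             (mm : {m : {m : M // m ≠ m₀} // ctx m.val = c}) => y ⟨mm.val.val, mm.prop⟩)
            ∘ (fun z (m : {m : M // ctx m = c}) => z m.val) := rfl
      rw [hcomp, ← Measure.map_map (measurable_of_countable _) (measurable_of_countable _),
        hS.2 c]
  refine ⟨S.map (resDel m₀), hSctx, ?_⟩
  intro q J hJ hJne T' hT'
  obtain ⟨T, hT, hTmap⟩ := extend_coupling ctx μ hμ m₀ T' hT'
  have hmeasE : MeasurableSet {x : {m : M // m ≠ m₀} → Bool | ∀ m ∈ J, ∀ m' ∈ J, x m = x m'} :=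
    (Set.toFinite _).measurableSet
  calc T' {x | ∀ m ∈ J, ∀ m' ∈ J, x m = x m'}
      = (T.map (resDel m₀)) {x | ∀ m ∈ J, ∀ m' ∈ J, x m = x m'} := by rw [hTmap]
    _ = T {z : M → Bool | ∀ m ∈ Subtype.val '' J, ∀ m' ∈ Subtype.val '' J, z m = z m'} := by
        rw [Measure.map_apply (measurable_of_countable _) hmeasE, hpre J]
    _ ≤ S {z : M → Bool | ∀ m ∈ Subtype.val '' J, ∀ m' ∈ Subtype.val '' J, z m = z m'} := by
        refine hmax q (Subtype.val '' J) ?_ (hJne.image _) T hT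
        rintro a ⟨m, hm, rfl⟩
        exact hJ m hm
    _ = (S.map (resDel m₀)) {x | ∀ m ∈ J, ∀ m' ∈ J, x m = x m'} := by
        rw [Measure.map_apply (measurable_of_countable _) hmeasE, hpre J]
end
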